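/- arXiv:2507.11018 — 3 statements merged into one kernel-verified Lean document; each statement's English description precedes it below -/
import Mathlib

section
/- Retirement program equivalence: a contract with retirement (s,p) is optimal with retirement if and only if p is given by (R-P*) and s maximizes s_1, i.e. for every nondecreasing sequence s′ : {0,…,K} → [0,1] with s′_0 = 0 satisfying (R-BE), one has s′_1 ≤ s_1, and s itself is nondecreasing with s_0 = 0 and satisfies (R-BE). -/
open Set Filter

/-- Principal's continuation value in the retirement model:
`Π^R_t(s,p) = Σ_{τ=t}^{K−1} δ^{τ−t}(π(s_τ) − p_τ) − δ^{K−1−t}·C(s_K)`. -/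
noncomputable def PiR (δ : ℝ) (π C : ℝ → ℝ) (K : ℕ) (s p : ℕ → ℝ) (t : ℕ) : ℝ :=
  (∑ τ ∈ Finset.Ico t K, δ ^ (τ - t) * (π (s τ) - p τ)) - δ ^ (K - 1 - t) * C (s K)

/-- Expert's continuation value in the retirement model:
`W^R_t(s,p) = Σ_{τ=t}^{K−1} δ^{τ−t}(w(s_τ) + p_τ)`. -/
noncomputable def WR (δ : ℝ) (w : ℝ → ℝ) (K : ℕ) (s p : ℕ → ℝ) (t : ℕ) : ℝ :=
  ∑ τ ∈ Finset.Ico t K, δ ^ (τ - t) * (w (s τ) + p τ)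

/-- Implementability in the retirement model: feasibility plus (R-P-IC) and (R-E-IC). -/
def ImplementableR (δ : ℝ) (π w C : ℝ → ℝ) (K : ℕ) (s p : ℕ → ℝ) : Prop :=
  (∀ t ≤ K, s t ∈ Set.Icc (0 : ℝ) 1) ∧ s 0 = 0 ∧
  (∀ t < K, s t ≤ s (t + 1)) ∧ (∀ t < K, 0 ≤ p t) ∧
  (∀ t < K,
    (1 - δ ^ (K - t)) * π (s t) / (1 - δ) - δ ^ (K - 1 - t) * C (s t)
      ≤ PiR δ π C K s p t) ∧
  (∀ t : ℕ, t + 1 < K →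
    (1 - δ ^ (K - t - 1)) * w (s t) / (1 - δ) ≤ WR δ w K s p (t + 1))

/-- Optimality in the retirement model. -/
def OptimalR (δ : ℝ) (π w C : ℝ → ℝ) (K : ℕ) (s p : ℕ → ℝ) : Prop :=
  ImplementableR δ π w C K s p ∧
  ∀ s' p' : ℕ → ℝ, ImplementableR δ π w C K s' p' →
    PiR δ π C K s' p' 0 ≤ PiR δ π C K s p 0

/-- The retirement break-even condition (R-BE), for every `t ∈ {1,…,K−1}`. -/
def RBE (δ : ℝ) (π w C : ℝ → ℝ) (K : ℕ) (s : ℕ → ℝ) : Prop :=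
  ∀ t : ℕ, 1 ≤ t → t ≤ K - 1 →
    (δ - δ ^ (K - t)) * (π (s (t + 1)) - π (s t)) / (1 - δ)
        + δ ^ (K - 1 - t) * (C (s t) - C (s (t + 1)))
      = (1 - δ ^ (K - t)) * (w (s (t - 1)) - w (s t)) / (1 - δ)

/-- The frontloaded payment scheme (R-P*) in the retirement model. -/
def RPstar (δ : ℝ) (w : ℝ → ℝ) (K : ℕ) (s p : ℕ → ℝ) : Prop :=
  p 0 = 0 ∧ ∀ t : ℕ, 1 ≤ t → t ≤ K - 1 →
    p t = (1 - δ ^ (K - t)) * (w (s (t - 1)) - w (s t)) / (1 - δ)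

/-!
Let `V(s)` be the principal's value of the path `s` under the payments (R-P*). These make every
(R-E-IC) bind, and `Π^R_t + W^R_t` does not depend on `p`, so every implementable `(s, p)` has
`Π^R_0(s, p) ≤ V(s)`, while `(s, R-P*)` is implementable exactly when the slacks `A_t` of (R-P-IC)
under (R-P*) are nonnegative. Optimal contracts are therefore the maximizers of `V` over paths with
nonnegative slacks, paid by (R-P*).

The slacks satisfy `A_t = δ A_{t+1} + (gap of (R-BE) at t)` with `A_K = 0`, so (R-BE) says exactly
that `A_1 = ⋯ = A_{K-1} = 0`; then `V(s) = π(0) + δ·(deviation value of s_1 at time 1)`, which is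
strictly increasing in `s_1`. A maximizer exists by compactness, and at a maximizer all slacks
vanish: at the last positive slack `A_t` the path must step up (a flat step has a nonpositive gap),
and raising `s_t` a little keeps every slack nonnegative while strictly increasing `V`, because
`π + w` is strictly increasing.
-/

namespace RetirementModel

section Algebra

variable {δ : ℝ}

def annuity (δ : ℝ) (n : ℕ) : ℝ := ∑ i ∈ Finset.range n, δ ^ i

@[simp]
theorem annuity_zero (δ : ℝ) : annuity δ 0 = 0 := rfl

@[simp]
theorem annuity_one (δ : ℝ) : annuity δ 1 = 1 := by simp [annuity]

theorem annuity_succ (δ : ℝ) (n : ℕ) : annuity δ (n + 1) = 1 + δ * annuity δ n := by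
  rw [annuity, annuity, geom_sum_succ, add_comm]

theorem annuity_nonneg (hδ : 0 ≤ δ) (n : ℕ) : 0 ≤ annuity δ n :=
  Finset.sum_nonneg fun i _ => pow_nonneg hδ i

theorem one_sub_pow_mul_div (hδ : δ ≠ 1) (n : ℕ) (c : ℝ) :
    (1 - δ ^ n) * c / (1 - δ) = annuity δ n * c := by
  have : (1 : ℝ) - δ ≠ 0 := sub_ne_zero.mpr hδ.symm
  rw [← mul_neg_geom_sum δ n, annuity]
  field_simp

theorem sub_pow_succ_mul_div (hδ : δ ≠ 1) (n : ℕ) (c : ℝ) :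
    (δ - δ ^ (n + 1)) * c / (1 - δ) = δ * annuity δ n * c := by
  rw [show δ - δ ^ (n + 1) = δ * (1 - δ ^ n) by ring, mul_assoc, mul_div_assoc,
    one_sub_pow_mul_div hδ, mul_assoc]

theorem sum_Ico_pow_sub_mul_eq_add {R : Type*} [CommSemiring R] (δ : R) (f : ℕ → R)
    {t K : ℕ} (h : t < K) :
    ∑ τ ∈ Finset.Ico t K, δ ^ (τ - t) * f τ
      = f t + δ * ∑ τ ∈ Finset.Ico (t + 1) K, δ ^ (τ - (t + 1)) * f τ := by
  rw [Finset.sum_eq_sum_Ico_succ_bot h, Nat.sub_self, pow_zero, one_mul, Finset.mul_sum]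
  congr 1
  refine Finset.sum_congr rfl fun τ hτ => ?_
  rw [show τ - t = τ - (t + 1) + 1 by have := (Finset.mem_Ico.1 hτ).1; omega, pow_succ]
  ring

theorem forall_eq_zero_iff_of_eq_mul_add {R : Type*} [Semiring R] {a b : ℕ → R} {c : R}
    {m K : ℕ} (ha : a K = 0) (hab : ∀ t < K, a t = c * a (t + 1) + b t) :
    (∀ t, m ≤ t → t < K → a t = 0) ↔ ∀ t, m ≤ t → t < K → b t = 0 := by
  constructor
  · intro h t hm ht
    have hsucc : a (t + 1) = 0 := by
      obtain hK | hK : t + 1 = K ∨ t + 1 < K := by omega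
      · rw [hK, ha]
      · exact h _ (by omega) hK
    simpa [h t hm ht, hsucc] using (hab t ht).symm
  · intro h
    suffices ∀ t ≤ K, m ≤ t → a t = 0 from fun t hm ht => this t ht.le hm
    intro t ht
    induction ht using Nat.decreasingInduction with
    | self => exact fun _ => ha
    | of_succ k hk ih =>
      intro hm
      rw [hab k hk, ih (by omega), h k hm hk, mul_zero, add_zero]

end Algebra

section Values

variable {δ : ℝ} {π w C : ℝ → ℝ} {K : ℕ} {s p : ℕ → ℝ} {t : ℕ}

/-- The payments (R-P*); at `t = 0` this is `0` because `0 - 1 = 0` in `ℕ`. -/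
def frontPay (δ : ℝ) (w : ℝ → ℝ) (K : ℕ) (s : ℕ → ℝ) (t : ℕ) : ℝ :=
  annuity δ (K - t) * (w (s (t - 1)) - w (s t))

/-- The right-hand side of (R-P-IC), for the level `x` frozen from time `t` on. -/
def deviationValue (δ : ℝ) (π C : ℝ → ℝ) (K t : ℕ) (x : ℝ) : ℝ :=
  annuity δ (K - t) * π x - δ ^ (K - 1 - t) * C x

def surplus (δ : ℝ) (π w C : ℝ → ℝ) (K : ℕ) (s : ℕ → ℝ) (t : ℕ) : ℝ :=
  ∑ τ ∈ Finset.Ico t K, δ ^ (τ - t) * (π (s τ) + w (s τ)) - δ ^ (K - 1 - t) * C (s K)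

/-- `Π^R_t` under the payments (R-P*), see `PiR_frontPay`. -/
def frontValue (δ : ℝ) (π w C : ℝ → ℝ) (K : ℕ) (s : ℕ → ℝ) (t : ℕ) : ℝ :=
  surplus δ π w C K s t - annuity δ (K - t) * w (s (t - 1))

def icSlack (δ : ℝ) (π w C : ℝ → ℝ) (K : ℕ) (s : ℕ → ℝ) (t : ℕ) : ℝ :=
  frontValue δ π w C K s t - deviationValue δ π C K t (s t)

/-- Left-hand side minus right-hand side of (R-BE), after dividing out `1 - δ`. -/
def beGap (δ : ℝ) (π w C : ℝ → ℝ) (K : ℕ) (s : ℕ → ℝ) (t : ℕ) : ℝ :=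
  δ * annuity δ (K - t - 1) * (π (s (t + 1)) - π (s t))
    + δ ^ (K - 1 - t) * (C (s t) - C (s (t + 1))) - frontPay δ w K s t

@[simp]
theorem frontPay_zero : frontPay δ w K s 0 = 0 := by simp [frontPay]

theorem WR_self : WR δ w K s p K = 0 := by simp [WR]

theorem WR_eq_add (h : t < K) :
    WR δ w K s p t = w (s t) + p t + δ * WR δ w K s p (t + 1) := by
  rw [WR, WR, sum_Ico_pow_sub_mul_eq_add δ (fun τ => w (s τ) + p τ) h, add_assoc]

theorem PiR_add_WR : PiR δ π C K s p t + WR δ w K s p t = surplus δ π w C K s t := by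
  rw [PiR, WR, surplus, sub_add_eq_add_sub, ← Finset.sum_add_distrib]
  congr 1
  exact Finset.sum_congr rfl fun τ _ => by ring

theorem PiR_eq_surplus_sub_WR :
    PiR δ π C K s p t = surplus δ π w C K s t - WR δ w K s p t :=
  eq_sub_of_add_eq PiR_add_WR

theorem surplus_eq_add (h : t + 1 < K) :
    surplus δ π w C K s t = π (s t) + w (s t) + δ * surplus δ π w C K s (t + 1) := by
  rw [surplus, surplus, sum_Ico_pow_sub_mul_eq_add δ (fun τ => π (s τ) + w (s τ)) (by omega),
    show K - 1 - t = K - 1 - (t + 1) + 1 by omega, pow_succ]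
  ring

theorem surplus_of_succ_eq (h : t + 1 = K) :
    surplus δ π w C K s t = π (s t) + w (s t) - C (s K) := by
  rw [surplus, sum_Ico_pow_sub_mul_eq_add δ (fun τ => π (s τ) + w (s τ)) (by omega), h,
    Finset.Ico_self, Finset.sum_empty, show K - 1 - t = 0 by omega]
  ring

theorem WR_frontPay (ht : t ≤ K) :
    WR δ w K s (frontPay δ w K s) t = annuity δ (K - t) * w (s (t - 1)) := by
  induction ht using Nat.decreasingInduction with
  | self => simp [WR_self]
  | of_succ k hk ih =>
    rw [WR_eq_add hk, ih, frontPay, show K - k = K - (k + 1) + 1 by omega, annuity_succ,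
      Nat.add_sub_cancel]
    ring

theorem PiR_frontPay (ht : t ≤ K) :
    PiR δ π C K s (frontPay δ w K s) t = frontValue δ π w C K s t := by
  rw [frontValue, ← PiR_add_WR (p := frontPay δ w K s), WR_frontPay ht, add_sub_cancel_right]

theorem frontValue_eq_add (h : t + 1 < K) :
    frontValue δ π w C K s t
      = π (s t) - frontPay δ w K s t + δ * frontValue δ π w C K s (t + 1) := by
  rw [frontValue, frontValue, frontPay, surplus_eq_add h,
    show K - t = K - (t + 1) + 1 by omega, annuity_succ, Nat.add_sub_cancel]
  ring

theorem icSlack_self : icSlack δ π w C K s K = 0 := by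
  simp [icSlack, frontValue, deviationValue, surplus]

theorem icSlack_eq_add (h : t < K) :
    icSlack δ π w C K s t = δ * icSlack δ π w C K s (t + 1) + beGap δ π w C K s t := by
  obtain hK | hK : t + 1 = K ∨ t + 1 < K := by omega
  · rw [hK, icSlack_self, icSlack, frontValue, surplus_of_succ_eq hK, beGap, deviationValue,
      frontPay, ← hK]
    simp only [Nat.add_sub_cancel_left, Nat.add_sub_cancel, Nat.sub_self, annuity_one,
      annuity_zero, pow_zero]
    ring
  · rw [icSlack, icSlack, frontValue_eq_add hK, beGap, deviationValue, deviationValue,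
      show K - t - 1 = K - (t + 1) by omega, show K - t = K - (t + 1) + 1 by omega, annuity_succ,
      show K - 1 - t = K - 1 - (t + 1) + 1 by omega, pow_succ]
    ring

theorem rbe_iff_beGap_eq_zero (hδ : δ ≠ 1) :
    RBE δ π w C K s ↔ ∀ t, 1 ≤ t → t < K → beGap δ π w C K s t = 0 := by
  refine forall_congr' fun t => ?_
  constructor
  · intro h ht₁ htK
    have key := h ht₁ (by omega)
    rw [show K - t = K - t - 1 + 1 by omega, sub_pow_succ_mul_div hδ, one_sub_pow_mul_div hδ,
      ← show K - t = K - t - 1 + 1 by omega] at key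
    rw [beGap, frontPay, ← key]
    ring
  · intro h ht₁ htK
    have key := h ht₁ (by omega)
    rw [show K - t = K - t - 1 + 1 by omega, sub_pow_succ_mul_div hδ, one_sub_pow_mul_div hδ,
      ← show K - t = K - t - 1 + 1 by omega]
    rw [beGap, frontPay] at key
    linear_combination key

theorem rbe_iff_icSlack_eq_zero (hδ : δ ≠ 1) :
    RBE δ π w C K s ↔ ∀ t, 1 ≤ t → t < K → icSlack δ π w C K s t = 0 :=
  (rbe_iff_beGap_eq_zero hδ).trans
    (forall_eq_zero_iff_of_eq_mul_add icSlack_self fun _ => icSlack_eq_add).symm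

theorem rpstar_iff (hδ : δ ≠ 1) (hK : 0 < K) :
    RPstar δ w K s p ↔ ∀ t < K, p t = frontPay δ w K s t := by
  constructor
  · rintro ⟨hp₀, hp⟩ t ht
    rcases Nat.eq_zero_or_pos t with rfl | ht₁
    · rw [hp₀, frontPay_zero]
    · rw [hp t ht₁ (by omega), one_sub_pow_mul_div hδ, frontPay]
  · intro hp
    refine ⟨(hp 0 hK).trans frontPay_zero, fun t ht₁ htK => ?_⟩
    rw [hp t (by omega), one_sub_pow_mul_div hδ, frontPay]

end Values

section Implementability

variable {δ : ℝ} {π w C : ℝ → ℝ} {K : ℕ} {s p p' : ℕ → ℝ} {t : ℕ}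

structure Admissible (K : ℕ) (s : ℕ → ℝ) : Prop where
  mem_Icc : ∀ t ≤ K, s t ∈ Icc (0 : ℝ) 1
  zero : s 0 = 0
  mono : ∀ t < K, s t ≤ s (t + 1)

def relaxedSet (δ : ℝ) (π w C : ℝ → ℝ) (K : ℕ) : Set (ℕ → ℝ) :=
  {s | Admissible K s ∧ ∀ t < K, 0 ≤ icSlack δ π w C K s t}

theorem Admissible.pred_le (hs : Admissible K s) (ht₁ : 1 ≤ t) (htK : t ≤ K) :
    s (t - 1) ≤ s t := by
  simpa [Nat.sub_add_cancel ht₁] using hs.mono (t - 1) (by omega)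

theorem frontPay_nonneg (hδ : 0 ≤ δ) (hw : AntitoneOn w (Icc 0 1)) (hs : Admissible K s)
    (ht : t ≤ K) : 0 ≤ frontPay δ w K s t := by
  rcases Nat.eq_zero_or_pos t with rfl | ht₁
  · rw [frontPay_zero]
  · exact mul_nonneg (annuity_nonneg hδ _) <| sub_nonneg.2 <|
      hw (hs.mem_Icc _ (by omega)) (hs.mem_Icc t ht) (hs.pred_le ht₁ ht)

theorem PiR_congr_right (hp : ∀ τ < K, p τ = p' τ) :
    PiR δ π C K s p t = PiR δ π C K s p' t := by
  rw [PiR, PiR, Finset.sum_congr rfl fun τ hτ => by rw [hp τ (Finset.mem_Ico.1 hτ).2]]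

theorem WR_congr_right (hp : ∀ τ < K, p τ = p' τ) : WR δ w K s p t = WR δ w K s p' t :=
  Finset.sum_congr rfl fun τ hτ => by rw [hp τ (Finset.mem_Ico.1 hτ).2]

theorem _root_.ImplementableR.congr_right (h : ImplementableR δ π w C K s p)
    (hp : ∀ τ < K, p τ = p' τ) : ImplementableR δ π w C K s p' := by
  obtain ⟨hb, h0, hmono, hpos, hP, hE⟩ := h
  exact ⟨hb, h0, hmono, fun t ht => hp t ht ▸ hpos t ht,
    fun t ht => PiR_congr_right hp ▸ hP t ht, fun t ht => WR_congr_right hp ▸ hE t ht⟩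

theorem _root_.ImplementableR.admissible (h : ImplementableR δ π w C K s p) : Admissible K s :=
  ⟨h.1, h.2.1, h.2.2.1⟩

theorem _root_.ImplementableR.WR_frontPay_le (h : ImplementableR δ π w C K s p) (hδ₀ : 0 ≤ δ)
    (hδ₁ : δ ≠ 1) (ht : t ≤ K) : WR δ w K s (frontPay δ w K s) t ≤ WR δ w K s p t := by
  obtain ⟨-, -, -, hp, -, hE⟩ := h
  have hpos : ∀ t, 1 ≤ t → t ≤ K → WR δ w K s (frontPay δ w K s) t ≤ WR δ w K s p t := by
    intro t ht₁ htK
    rcases htK.eq_or_lt with rfl | htK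
    · rw [WR_self, WR_self]
    · have hE := hE (t - 1) (by omega)
      rwa [one_sub_pow_mul_div hδ₁, Nat.sub_add_cancel ht₁,
        show K - (t - 1) - 1 = K - t by omega, ← WR_frontPay htK.le] at hE
  rcases Nat.eq_zero_or_pos t with rfl | ht₁
  · rcases Nat.eq_zero_or_pos K with hK | hK
    · rw [← hK, WR_self, WR_self]
    · rw [WR_eq_add hK, WR_eq_add hK, frontPay_zero]
      have := mul_le_mul_of_nonneg_left (hpos 1 le_rfl hK) hδ₀
      linarith [hp 0 hK]
  · exact hpos t ht₁ ht

theorem _root_.ImplementableR.PiR_le_frontValue (h : ImplementableR δ π w C K s p) (hδ₀ : 0 ≤ δ)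
    (hδ₁ : δ ≠ 1) (ht : t ≤ K) : PiR δ π C K s p t ≤ frontValue δ π w C K s t := by
  rw [← PiR_frontPay ht, PiR_eq_surplus_sub_WR (w := w), PiR_eq_surplus_sub_WR (w := w)]
  exact sub_le_sub_left (h.WR_frontPay_le hδ₀ hδ₁ ht) _

theorem _root_.ImplementableR.deviationValue_le_PiR (h : ImplementableR δ π w C K s p) (hδ : δ ≠ 1)
    (ht : t < K) : deviationValue δ π C K t (s t) ≤ PiR δ π C K s p t := by
  obtain ⟨-, -, -, -, hP, -⟩ := h
  have hP := hP t ht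
  rwa [one_sub_pow_mul_div hδ] at hP

theorem _root_.ImplementableR.mem_relaxedSet (h : ImplementableR δ π w C K s p) (hδ₀ : 0 ≤ δ)
    (hδ₁ : δ ≠ 1) : s ∈ relaxedSet δ π w C K :=
  ⟨h.admissible, fun _ ht => sub_nonneg.2 <|
    (h.deviationValue_le_PiR hδ₁ ht).trans (h.PiR_le_frontValue hδ₀ hδ₁ ht.le)⟩

theorem implementableR_frontPay (hδ₀ : 0 ≤ δ) (hδ₁ : δ ≠ 1) (hw : AntitoneOn w (Icc 0 1))
    (hs : s ∈ relaxedSet δ π w C K) : ImplementableR δ π w C K s (frontPay δ w K s) := by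
  obtain ⟨hadm, hA⟩ := hs
  refine ⟨hadm.mem_Icc, hadm.zero, hadm.mono, fun t ht => frontPay_nonneg hδ₀ hw hadm ht.le,
    fun t ht => ?_, fun t ht => ?_⟩
  · have := hA t ht
    rw [icSlack, deviationValue] at this
    rw [one_sub_pow_mul_div hδ₁, PiR_frontPay ht.le]
    linarith
  · rw [one_sub_pow_mul_div hδ₁, WR_frontPay (by omega), Nat.add_sub_cancel,
      show K - t - 1 = K - (t + 1) by omega]

theorem _root_.ImplementableR.eq_frontPay (h : ImplementableR δ π w C K s p) (hδ₀ : 0 ≤ δ)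
    (hδ₁ : δ ≠ 1) (hA : ∀ t, 1 ≤ t → t < K → icSlack δ π w C K s t = 0)
    (hPi : frontValue δ π w C K s 0 ≤ PiR δ π C K s p 0) :
    ∀ t < K, p t = frontPay δ w K s t := by
  have hPiR : ∀ t ≤ K, PiR δ π C K s p t = PiR δ π C K s (frontPay δ w K s) t := by
    intro t ht
    rw [PiR_frontPay ht]
    refine (h.PiR_le_frontValue hδ₀ hδ₁ ht).antisymm ?_
    rcases Nat.eq_zero_or_pos t with rfl | ht₁
    · exact hPi
    rcases ht.eq_or_lt with rfl | htK
    · rw [← PiR_frontPay le_rfl]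
      simp [PiR]
    · have := h.deviationValue_le_PiR hδ₁ htK
      have hA := hA t ht₁ htK
      rw [icSlack] at hA
      linarith
  have hWR : ∀ t ≤ K, WR δ w K s p t = WR δ w K s (frontPay δ w K s) t := fun t ht => by
    have := hPiR t ht
    rwa [PiR_eq_surplus_sub_WR (w := w), PiR_eq_surplus_sub_WR (w := w), sub_right_inj] at this
  intro t ht
  have key := hWR t ht.le
  rw [WR_eq_add ht, WR_eq_add ht, hWR (t + 1) ht] at key
  linarith

end Implementability

section RelaxedProblem

variable {δ : ℝ} {π w C : ℝ → ℝ} {K : ℕ} {s : ℕ → ℝ}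

theorem frontValue_zero_eq (h0 : s 0 = 0) (hK : 1 < K) :
    frontValue δ π w C K s 0
      = π 0 + δ * (deviationValue δ π C K 1 (s 1) + icSlack δ π w C K s 1) := by
  rw [frontValue_eq_add hK, frontPay_zero, h0, icSlack]
  ring

theorem deviationValue_strictMonoOn (hδ : 0 < δ) (hπ : MonotoneOn π (Icc 0 1))
    (hC : StrictAntiOn C (Icc 0 1)) (K t : ℕ) :
    StrictMonoOn (deviationValue δ π C K t) (Icc 0 1) := by
  intro x hx y hy hxy
  have h₁ := mul_le_mul_of_nonneg_left (hπ hx hy hxy.le) (annuity_nonneg hδ.le (K - t))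
  have h₂ := mul_lt_mul_of_pos_left (hC hx hy hxy) (pow_pos hδ (K - 1 - t))
  simp only [deviationValue]
  linarith

theorem beGap_zero_nonneg (hδ : 0 ≤ δ) (hπ : MonotoneOn π (Icc 0 1))
    (hC : AntitoneOn C (Icc 0 1)) (hs : Admissible K s) (hK : 0 < K) :
    0 ≤ beGap δ π w C K s 0 := by
  have hx := hs.mem_Icc 0 hK.le
  have hy := hs.mem_Icc 1 hK
  have hle := hs.mono 0 hK
  rw [beGap, frontPay_zero, sub_zero]
  exact add_nonneg
    (mul_nonneg (mul_nonneg hδ (annuity_nonneg hδ _)) (sub_nonneg.2 (hπ hx hy hle)))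
    (mul_nonneg (pow_nonneg hδ _) (sub_nonneg.2 (hC hx hy hle)))

theorem mem_relaxedSet_of_rbe (hδ₀ : 0 ≤ δ) (hδ₁ : δ ≠ 1) (hπ : MonotoneOn π (Icc 0 1))
    (hC : AntitoneOn C (Icc 0 1)) (hs : Admissible K s) (h : RBE δ π w C K s) :
    s ∈ relaxedSet δ π w C K := by
  have hA := (rbe_iff_icSlack_eq_zero hδ₁).1 h
  refine ⟨hs, fun t ht => ?_⟩
  rcases Nat.eq_zero_or_pos t with rfl | ht₁
  · have hA₁ : icSlack δ π w C K s 1 = 0 := by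
      rcases (Nat.succ_le_of_lt ht).eq_or_lt with hK | hK
      · rw [← hK, icSlack_self]
      · exact hA 1 le_rfl hK
    rw [icSlack_eq_add ht, hA₁, mul_zero, zero_add]
    exact beGap_zero_nonneg hδ₀ hπ hC hs ht
  · exact (hA t ht₁ ht).ge

end RelaxedProblem

section Compactness

variable {δ : ℝ} {π w C : ℝ → ℝ} {K : ℕ} {s s' : ℕ → ℝ} {t : ℕ}

def unitBox (K : ℕ) : Set (ℕ → ℝ) := {s | ∀ τ ≤ K, s τ ∈ Icc 0 1}

theorem isClosed_unitBox (K : ℕ) : IsClosed (unitBox K) := by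
  simp only [unitBox, ofPred_forall]
  exact isClosed_iInter fun τ => isClosed_iInter fun _ =>
    isClosed_Icc.preimage (continuous_apply τ)

theorem continuousOn_comp_apply {f : ℝ → ℝ} (hf : ContinuousOn f (Icc 0 1)) {τ : ℕ}
    (hτ : τ ≤ K) : ContinuousOn (fun s : ℕ → ℝ => f (s τ)) (unitBox K) :=
  hf.comp (continuous_apply τ).continuousOn fun _ hs => hs τ hτ

theorem continuousOn_frontValue (hπ : ContinuousOn π (Icc 0 1))
    (hw : ContinuousOn w (Icc 0 1)) (hC : ContinuousOn C (Icc 0 1)) (ht : t ≤ K) :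
    ContinuousOn (fun s => frontValue δ π w C K s t) (unitBox K) := by
  simp only [frontValue, surplus]
  refine ((continuousOn_finsetSum _ fun τ hτ => ?_).sub
    (continuousOn_const.mul (continuousOn_comp_apply hC le_rfl))).sub
    (continuousOn_const.mul (continuousOn_comp_apply hw (by omega)))
  have hτ : τ ≤ K := (Finset.mem_Ico.1 hτ).2.le
  exact continuousOn_const.mul ((continuousOn_comp_apply hπ hτ).add (continuousOn_comp_apply hw hτ))

theorem continuousOn_icSlack (hπ : ContinuousOn π (Icc 0 1))
    (hw : ContinuousOn w (Icc 0 1)) (hC : ContinuousOn C (Icc 0 1)) (ht : t ≤ K) :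
    ContinuousOn (fun s => icSlack δ π w C K s t) (unitBox K) :=
  (continuousOn_frontValue hπ hw hC ht).sub <|
    (continuousOn_const.mul (continuousOn_comp_apply hπ ht)).sub
      (continuousOn_const.mul (continuousOn_comp_apply hC ht))

theorem isClosed_relaxedSet (hπ : ContinuousOn π (Icc 0 1))
    (hw : ContinuousOn w (Icc 0 1)) (hC : ContinuousOn C (Icc 0 1)) :
    IsClosed (relaxedSet δ π w C K) := by
  have hsub : relaxedSet δ π w C K ⊆ unitBox K := fun s hs => hs.1.mem_Icc
  refine isClosed_of_closure_subset fun s hs => ?_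
  have hbox : s ∈ unitBox K := closure_minimal hsub (isClosed_unitBox K) hs
  have hlimit : ∀ {f g : (ℕ → ℝ) → ℝ}, ContinuousOn f (unitBox K) → ContinuousOn g (unitBox K) →
      (∀ s' ∈ relaxedSet δ π w C K, f s' ≤ g s') → f s ≤ g s := fun hf hg hfg =>
    ContinuousWithinAt.closure_le hs ((hf s hbox).mono hsub) ((hg s hbox).mono hsub) hfg
  have hcoord : ∀ τ, ContinuousOn (fun s : ℕ → ℝ => s τ) (unitBox K) :=
    fun τ => (continuous_apply τ).continuousOn
  refine ⟨⟨hbox, ?_, fun t ht => hlimit (hcoord t) (hcoord (t + 1)) fun s' hs' => hs'.1.mono t ht⟩,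
    fun t ht =>
      hlimit continuousOn_const (continuousOn_icSlack hπ hw hC ht.le) fun s' hs' => hs'.2 t ht⟩
  exact (hlimit (hcoord 0) continuousOn_const fun s' hs' => hs'.1.zero.le).antisymm
    (hlimit continuousOn_const (hcoord 0) fun s' hs' => hs'.1.zero.ge)

theorem zero_mem_relaxedSet : (0 : ℕ → ℝ) ∈ relaxedSet δ π w C K := by
  have hA := (forall_eq_zero_iff_of_eq_mul_add (m := 0) (icSlack_self (K := K) (s := 0)) fun _ =>
    icSlack_eq_add (δ := δ) (π := π) (w := w) (C := C)).2 fun t _ _ => by simp [beGap, frontPay]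
  exact ⟨⟨fun _ _ => left_mem_Icc.2 zero_le_one, rfl, fun _ _ => le_rfl⟩,
    fun t ht => (hA t t.zero_le ht).ge⟩

theorem surplus_congr (h : ∀ τ ≤ K, s τ = s' τ) :
    surplus δ π w C K s t = surplus δ π w C K s' t := by
  rw [surplus, surplus, h K le_rfl,
    Finset.sum_congr rfl fun τ hτ => by rw [h τ (Finset.mem_Ico.1 hτ).2.le]]

theorem frontValue_congr (h : ∀ τ ≤ K, s τ = s' τ) (ht : t ≤ K) :
    frontValue δ π w C K s t = frontValue δ π w C K s' t := by
  rw [frontValue, frontValue, surplus_congr h, h (t - 1) (by omega)]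

theorem icSlack_congr (h : ∀ τ ≤ K, s τ = s' τ) (ht : t ≤ K) :
    icSlack δ π w C K s t = icSlack δ π w C K s' t := by
  rw [icSlack, icSlack, frontValue_congr h ht, h t ht]

theorem relaxedSet_congr (h : ∀ τ ≤ K, s τ = s' τ) (hs : s ∈ relaxedSet δ π w C K) :
    s' ∈ relaxedSet δ π w C K :=
  ⟨⟨fun t ht => h t ht ▸ hs.1.mem_Icc t ht, h 0 (Nat.zero_le K) ▸ hs.1.zero,
    fun t ht => h t ht.le ▸ h (t + 1) ht ▸ hs.1.mono t ht⟩,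
    fun t ht => icSlack_congr h ht.le ▸ hs.2 t ht⟩

theorem exists_isMaxOn_frontValue (hπ : ContinuousOn π (Icc 0 1))
    (hw : ContinuousOn w (Icc 0 1)) (hC : ContinuousOn C (Icc 0 1)) :
    ∃ m ∈ relaxedSet δ π w C K,
      IsMaxOn (fun s => frontValue δ π w C K s 0) (relaxedSet δ π w C K) m := by
  classical
  -- `relaxedSet` is not compact, but only values on `[0, K]` matter: truncate into `box`
  let box : Set (ℕ → ℝ) := Set.pi univ fun τ => if τ ≤ K then Icc 0 1 else {0}
  have hbox : IsCompact box := isCompact_univ_pi fun τ => by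
    split_ifs
    exacts [isCompact_Icc, isCompact_singleton]
  let trunc : (ℕ → ℝ) → ℕ → ℝ := fun s τ => if τ ≤ K then s τ else 0
  have htrunc : ∀ s, ∀ τ ≤ K, s τ = trunc s τ := fun s τ hτ => (if_pos hτ).symm
  have htrunc_mem : ∀ s ∈ relaxedSet δ π w C K, trunc s ∈ box ∩ relaxedSet δ π w C K :=
    fun s hs => ⟨fun τ _ => by
      by_cases hτ : τ ≤ K <;> simp [trunc, hτ, hs.1.mem_Icc τ], relaxedSet_congr (htrunc s) hs⟩
  obtain ⟨m, hm, hmax⟩ := (hbox.inter_right (isClosed_relaxedSet hπ hw hC)).exists_isMaxOn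
    ⟨_, htrunc_mem 0 zero_mem_relaxedSet⟩
    ((continuousOn_frontValue hπ hw hC (Nat.zero_le K)).mono fun s hs => hs.2.1.mem_Icc)
  refine ⟨m, hm.2, isMaxOn_iff.2 fun s hs => ?_⟩
  rw [frontValue_congr (htrunc s) (Nat.zero_le K)]
  exact isMaxOn_iff.1 hmax _ (htrunc_mem s hs)

end Compactness

section Perturbation

variable {δ : ℝ} {π w C : ℝ → ℝ} {K : ℕ} {s s' : ℕ → ℝ} {t : ℕ} {y : ℝ}

theorem surplus_le_surplus (hδ : 0 ≤ δ) (hG : MonotoneOn (fun x => π x + w x) (Icc 0 1))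
    (hC : AntitoneOn C (Icc 0 1)) (hs : s ∈ unitBox K) (hs' : s' ∈ unitBox K)
    (hle : ∀ τ ≤ K, s τ ≤ s' τ) : surplus δ π w C K s t ≤ surplus δ π w C K s' t := by
  refine sub_le_sub (Finset.sum_le_sum fun τ hτ => ?_) <|
    mul_le_mul_of_nonneg_left (hC (hs K le_rfl) (hs' K le_rfl) (hle K le_rfl)) (pow_nonneg hδ _)
  have hτ := (Finset.mem_Ico.1 hτ).2.le
  exact mul_le_mul_of_nonneg_left (hG (hs τ hτ) (hs' τ hτ) (hle τ hτ)) (pow_nonneg hδ _)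

theorem surplus_lt_surplus (hδ : 0 < δ) (hG : StrictMonoOn (fun x => π x + w x) (Icc 0 1))
    (hC : AntitoneOn C (Icc 0 1)) (hs : s ∈ unitBox K) (hs' : s' ∈ unitBox K)
    (hle : ∀ τ ≤ K, s τ ≤ s' τ) (hlt : ∃ τ ∈ Finset.Ico t K, s τ < s' τ) :
    surplus δ π w C K s t < surplus δ π w C K s' t := by
  have hmem : ∀ τ ∈ Finset.Ico t K, τ ≤ K := fun τ hτ => (Finset.mem_Ico.1 hτ).2.le
  refine (sub_lt_sub_right (Finset.sum_lt_sum (fun τ hτ => ?_) ?_) _).trans_le <| sub_le_sub_left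
    (mul_le_mul_of_nonneg_left (hC (hs K le_rfl) (hs' K le_rfl) (hle K le_rfl))
      (pow_nonneg hδ.le _)) _
  · exact mul_le_mul_of_nonneg_left
      (hG.monotoneOn (hs τ (hmem τ hτ)) (hs' τ (hmem τ hτ)) (hle τ (hmem τ hτ)))
      (pow_nonneg hδ.le _)
  · obtain ⟨τ, hτ, hlt⟩ := hlt
    exact ⟨τ, hτ, mul_lt_mul_of_pos_left (hG (hs τ (hmem τ hτ)) (hs' τ (hmem τ hτ)) hlt)
      (pow_pos hδ _)⟩

theorem icSlack_le_icSlack (hδ : 0 ≤ δ) (hG : MonotoneOn (fun x => π x + w x) (Icc 0 1))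
    (hw : AntitoneOn w (Icc 0 1)) (hC : AntitoneOn C (Icc 0 1)) (hs : s ∈ unitBox K)
    (hs' : s' ∈ unitBox K) (hle : ∀ τ ≤ K, s τ ≤ s' τ) (ht : t ≤ K) (heq : s t = s' t) :
    icSlack δ π w C K s t ≤ icSlack δ π w C K s' t := by
  have h₁ := surplus_le_surplus (t := t) hδ hG hC hs hs' hle
  have h₂ := mul_le_mul_of_nonneg_left
    (hw (hs (t - 1) (by omega)) (hs' (t - 1) (by omega)) (hle (t - 1) (by omega)))
    (annuity_nonneg hδ (K - t))
  rw [icSlack, icSlack, frontValue, frontValue, heq]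
  linarith

theorem update_mem_unitBox (hs : s ∈ unitBox K) (hy : y ∈ Icc 0 1) :
    Function.update s t y ∈ unitBox K := fun τ hτ => by
  rcases eq_or_ne τ t with rfl | hne
  · simpa using hy
  · simpa [hne] using hs τ hτ

theorem Admissible.update (hs : Admissible K s) (ht₁ : 1 ≤ t) (htK : t < K)
    (hy : y ∈ Icc (s (t - 1)) (s (t + 1))) : Admissible K (Function.update s t y) where
  mem_Icc := update_mem_unitBox hs.mem_Icc
    ⟨(hs.mem_Icc (t - 1) (by omega)).1.trans hy.1, hy.2.trans (hs.mem_Icc (t + 1) htK).2⟩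
  zero := by rw [Function.update_of_ne (by omega), hs.zero]
  mono τ hτ := by
    simp only [Function.update_apply]
    split_ifs with h₁ h₂ h₂
    · omega
    · subst h₁; exact hy.2
    · subst h₂; simpa using hy.1
    · exact hs.mono τ hτ

theorem exists_mem_Ioo_icSlack_update_pos (hπ : ContinuousOn π (Icc 0 1))
    (hw : ContinuousOn w (Icc 0 1)) (hC : ContinuousOn C (Icc 0 1)) (hs : s ∈ unitBox K)
    (ht : t < K) (hA : 0 < icSlack δ π w C K s t) (hlt : s t < s (t + 1)) :
    ∃ y ∈ Ioo (s t) (s (t + 1)), 0 < icSlack δ π w C K (Function.update s t y) t := by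
  have hsub : Ioo (s t) (s (t + 1)) ⊆ Icc 0 1 :=
    Ioo_subset_Icc_self.trans (Icc_subset_Icc (hs t ht.le).1 (hs (t + 1) ht).2)
  have hg : ContinuousOn (fun y => icSlack δ π w C K (Function.update s t y) t) (Icc 0 1) :=
    (continuousOn_icSlack hπ hw hC ht.le).comp
      (continuous_const.update t continuous_id : Continuous (Function.update s t)).continuousOn
      fun _ hy => update_mem_unitBox hs hy
  have hpos : 0 < icSlack δ π w C K (Function.update s t (s t)) t := by
    rwa [Function.update_eq_self]
  have := left_nhdsWithin_Ioo_neBot hlt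
  obtain ⟨y, hyA, hy⟩ := ((((hg (s t) (hs t ht.le)).mono hsub).eventually
    (lt_mem_nhds hpos)).and self_mem_nhdsWithin).exists
  exact ⟨y, hy, hyA⟩

theorem exists_frontValue_lt_of_icSlack_pos (hδ : 0 < δ) (hπ : ContinuousOn π (Icc 0 1))
    (hw : ContinuousOn w (Icc 0 1)) (hC : ContinuousOn C (Icc 0 1))
    (hG : StrictMonoOn (fun x => π x + w x) (Icc 0 1)) (hwa : AntitoneOn w (Icc 0 1))
    (hCa : AntitoneOn C (Icc 0 1)) (hs : s ∈ relaxedSet δ π w C K) (ht₁ : 1 ≤ t) (htK : t < K)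
    (hA : 0 < icSlack δ π w C K s t) (hlt : s t < s (t + 1)) :
    ∃ s' ∈ relaxedSet δ π w C K, frontValue δ π w C K s 0 < frontValue δ π w C K s' 0 := by
  obtain ⟨y, hy, hAy⟩ := exists_mem_Ioo_icSlack_update_pos hπ hw hC hs.1.mem_Icc htK hA hlt
  have hadm := hs.1.update ht₁ htK ⟨(hs.1.pred_le ht₁ htK.le).trans hy.1.le, hy.2.le⟩
  have hle : ∀ τ ≤ K, s τ ≤ Function.update s t y τ := fun τ _ => by
    rcases eq_or_ne τ t with rfl | hne
    · simpa using hy.1.le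
    · simp [hne]
  refine ⟨_, ⟨hadm, fun τ hτ => ?_⟩, ?_⟩
  · rcases eq_or_ne τ t with rfl | hne
    · exact hAy.le
    · exact (hs.2 τ hτ).trans <| icSlack_le_icSlack hδ.le hG.monotoneOn hwa hCa hs.1.mem_Icc
        hadm.mem_Icc hle hτ.le (Function.update_of_ne hne y s).symm
  · rw [frontValue, frontValue, Nat.zero_sub, hadm.zero, hs.1.zero]
    exact sub_lt_sub_right (surplus_lt_surplus hδ hG hCa hs.1.mem_Icc hadm.mem_Icc hle
      ⟨t, Finset.mem_Ico.2 ⟨Nat.zero_le t, htK⟩, by simpa using hy.1⟩) _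

theorem exists_ge_icSlack_pos_lt (hδ : 0 ≤ δ) (hw : AntitoneOn w (Icc 0 1))
    (hs : Admissible K s) (hA : 0 < icSlack δ π w C K s t) (ht : t < K) :
    ∃ t' ≥ t, t' < K ∧ 0 < icSlack δ π w C K s t' ∧ s t' < s (t' + 1) := by
  induction ht.le using Nat.decreasingInduction with
  | self => exact absurd ht (lt_irrefl K)
  | of_succ k hk ih =>
    rcases (hs.mono k hk).lt_or_eq with hlt | heq
    · exact ⟨k, le_rfl, hk, hA, hlt⟩
    -- a flat step has `beGap ≤ 0`, so the slack must come from `k + 1`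
    have hB : beGap δ π w C K s k ≤ 0 := by
      rw [beGap, heq, sub_self, sub_self, mul_zero, mul_zero, add_zero, zero_sub, neg_nonpos]
      exact frontPay_nonneg hδ hw hs hk.le
    have hA' : 0 < icSlack δ π w C K s (k + 1) := by
      rw [icSlack_eq_add hk] at hA
      exact pos_of_mul_pos_right (by linarith) hδ
    have hk' : k + 1 < K := by
      obtain hK | hK : k + 1 = K ∨ k + 1 < K := by omega
      · rw [hK, icSlack_self] at hA'
        exact absurd hA' (lt_irrefl 0)
      · exact hK
    obtain ⟨t', ht', h⟩ := ih hA' hk'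
    exact ⟨t', by omega, h⟩

end Perturbation

section Optimality

variable {δ : ℝ} {π w C : ℝ → ℝ} {K : ℕ} {s p : ℕ → ℝ}

theorem icSlack_eq_zero_of_isMaxOn (hδ : 0 < δ) (hπ : ContinuousOn π (Icc 0 1))
    (hw : ContinuousOn w (Icc 0 1)) (hC : ContinuousOn C (Icc 0 1))
    (hG : StrictMonoOn (fun x => π x + w x) (Icc 0 1)) (hwa : AntitoneOn w (Icc 0 1))
    (hCa : AntitoneOn C (Icc 0 1)) (hs : s ∈ relaxedSet δ π w C K)
    (hmax : IsMaxOn (fun s => frontValue δ π w C K s 0) (relaxedSet δ π w C K) s) {t : ℕ}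
    (ht₁ : 1 ≤ t) (htK : t < K) : icSlack δ π w C K s t = 0 := by
  by_contra hne
  obtain ⟨t', ht', ht'K, hA, hlt⟩ :=
    exists_ge_icSlack_pos_lt hδ.le hwa hs.1 ((hs.2 t htK).lt_of_ne' hne) htK
  obtain ⟨s', hs', hlt'⟩ :=
    exists_frontValue_lt_of_icSlack_pos hδ hπ hw hC hG hwa hCa hs (by omega) ht'K hA hlt
  exact (isMaxOn_iff.1 hmax s' hs').not_gt hlt'

theorem frontValue_zero_le_iff_of_rbe (hδ₀ : 0 < δ) (hδ₁ : δ ≠ 1) (hK : 1 < K)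
    (hπ : MonotoneOn π (Icc 0 1)) (hC : StrictAntiOn C (Icc 0 1)) {s₁ s₂ : ℕ → ℝ}
    (hs₁ : Admissible K s₁) (hs₂ : Admissible K s₂) (h₁ : RBE δ π w C K s₁)
    (h₂ : RBE δ π w C K s₂) :
    frontValue δ π w C K s₁ 0 ≤ frontValue δ π w C K s₂ 0 ↔ s₁ 1 ≤ s₂ 1 := by
  rw [frontValue_zero_eq hs₁.zero hK, frontValue_zero_eq hs₂.zero hK,
    (rbe_iff_icSlack_eq_zero hδ₁).1 h₁ 1 le_rfl hK, (rbe_iff_icSlack_eq_zero hδ₁).1 h₂ 1 le_rfl hK,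
    add_zero, add_zero, add_le_add_iff_left, mul_le_mul_iff_of_pos_left hδ₀,
    (deviationValue_strictMonoOn hδ₀ hπ hC K 1).le_iff_le (hs₁.mem_Icc 1 hK.le)
      (hs₂.mem_Icc 1 hK.le)]

theorem isMaxOn_frontValue_iff (hδ₀ : 0 < δ) (hδ₁ : δ ≠ 1) (hK : 1 < K)
    (hπ : ContinuousOn π (Icc 0 1)) (hw : ContinuousOn w (Icc 0 1))
    (hC : ContinuousOn C (Icc 0 1)) (hπm : MonotoneOn π (Icc 0 1))
    (hG : StrictMonoOn (fun x => π x + w x) (Icc 0 1)) (hwa : AntitoneOn w (Icc 0 1))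
    (hCa : StrictAntiOn C (Icc 0 1)) (hs : s ∈ relaxedSet δ π w C K) :
    IsMaxOn (fun s => frontValue δ π w C K s 0) (relaxedSet δ π w C K) s ↔
      RBE δ π w C K s ∧ ∀ s', Admissible K s' → RBE δ π w C K s' → s' 1 ≤ s 1 := by
  have hrbe : ∀ {m}, m ∈ relaxedSet δ π w C K →
      IsMaxOn (fun s => frontValue δ π w C K s 0) (relaxedSet δ π w C K) m → RBE δ π w C K m :=
    fun hm hmax => (rbe_iff_icSlack_eq_zero hδ₁).2 fun _ ht₁ htK =>
      icSlack_eq_zero_of_isMaxOn hδ₀ hπ hw hC hG hwa hCa.antitoneOn hm hmax ht₁ htK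
  constructor
  · intro hmax
    refine ⟨hrbe hs hmax, fun s' hs' hrbe' => ?_⟩
    refine (frontValue_zero_le_iff_of_rbe hδ₀ hδ₁ hK hπm hCa hs' hs.1 hrbe' (hrbe hs hmax)).1 ?_
    exact isMaxOn_iff.1 hmax s' (mem_relaxedSet_of_rbe hδ₀.le hδ₁ hπm hCa.antitoneOn hs' hrbe')
  · rintro ⟨hrbe_s, hfirst⟩
    obtain ⟨m, hm, hmmax⟩ := exists_isMaxOn_frontValue hπ hw hC
    have hrbe_m := hrbe hm hmmax
    refine isMaxOn_iff.2 fun s' hs' => (isMaxOn_iff.1 hmmax s' hs').trans ?_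
    exact (frontValue_zero_le_iff_of_rbe hδ₀ hδ₁ hK hπm hCa hm.1 hs.1 hrbe_m hrbe_s).2
      (hfirst m hm.1 hrbe_m)

theorem optimalR_iff (hδ₀ : 0 < δ) (hδ₁ : δ ≠ 1) (hπ : ContinuousOn π (Icc 0 1))
    (hw : ContinuousOn w (Icc 0 1)) (hC : ContinuousOn C (Icc 0 1))
    (hG : StrictMonoOn (fun x => π x + w x) (Icc 0 1)) (hwa : AntitoneOn w (Icc 0 1))
    (hCa : AntitoneOn C (Icc 0 1)) :
    OptimalR δ π w C K s p ↔ (∀ t < K, p t = frontPay δ w K s t) ∧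
      s ∈ relaxedSet δ π w C K ∧
      IsMaxOn (fun s => frontValue δ π w C K s 0) (relaxedSet δ π w C K) s := by
  constructor
  · rintro ⟨himpl, hopt⟩
    have hs := himpl.mem_relaxedSet hδ₀.le hδ₁
    have hle : ∀ s' ∈ relaxedSet δ π w C K, frontValue δ π w C K s' 0 ≤ PiR δ π C K s p 0 :=
      fun s' hs' => PiR_frontPay (Nat.zero_le K) ▸
        hopt _ _ (implementableR_frontPay hδ₀.le hδ₁ hwa hs')
    have hmax : IsMaxOn (fun s => frontValue δ π w C K s 0) (relaxedSet δ π w C K) s :=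
      isMaxOn_iff.2 fun s' hs' =>
        (hle s' hs').trans (himpl.PiR_le_frontValue hδ₀.le hδ₁ (Nat.zero_le K))
    exact ⟨himpl.eq_frontPay hδ₀.le hδ₁
      (fun _ ht₁ htK => icSlack_eq_zero_of_isMaxOn hδ₀ hπ hw hC hG hwa hCa hs hmax ht₁ htK)
      (hle s hs), hs, hmax⟩
  · rintro ⟨hp, hs, hmax⟩
    refine ⟨(implementableR_frontPay hδ₀.le hδ₁ hwa hs).congr_right fun t ht => (hp t ht).symm,
      fun s' p' himpl' => ?_⟩
    calc PiR δ π C K s' p' 0 ≤ frontValue δ π w C K s' 0 :=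
          himpl'.PiR_le_frontValue hδ₀.le hδ₁ (Nat.zero_le K)
      _ ≤ frontValue δ π w C K s 0 := isMaxOn_iff.1 hmax s' (himpl'.mem_relaxedSet hδ₀.le hδ₁)
      _ = PiR δ π C K s p 0 := by rw [← PiR_frontPay (Nat.zero_le K), PiR_congr_right hp]

end Optimality

end RetirementModel

open RetirementModel

theorem retirement_program_equivalence_general
    (δ : ℝ) (hδ : δ ∈ Set.Ioo (0 : ℝ) 1) (K : ℕ) (hK : 2 ≤ K) (π w C : ℝ → ℝ)
    (hπc : ContinuousOn π (Set.Icc 0 1)) (hwc : ContinuousOn w (Set.Icc 0 1))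
    (hπm : StrictMonoOn π (Set.Icc 0 1)) (hwa : StrictAntiOn w (Set.Icc 0 1))
    (hGm : StrictMonoOn (fun x => π x + w x) (Set.Icc 0 1))
    (hCc : ContinuousOn C (Set.Icc 0 1)) (hCa : StrictAntiOn C (Set.Icc 0 1))
    (s p : ℕ → ℝ) (hs : ∀ t ≤ K, s t ∈ Set.Icc (0 : ℝ) 1) (h0 : s 0 = 0) :
    OptimalR δ π w C K s p ↔
      (RPstar δ w K s p ∧ (∀ t < K, s t ≤ s (t + 1)) ∧ RBE δ π w C K s ∧
        ∀ s' : ℕ → ℝ, (∀ t ≤ K, s' t ∈ Set.Icc (0 : ℝ) 1) → s' 0 = 0 →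
          (∀ t < K, s' t ≤ s' (t + 1)) → RBE δ π w C K s' → s' 1 ≤ s 1) := by
  obtain ⟨hδ₀, hδ₁⟩ := hδ
  have hmax_iff := isMaxOn_frontValue_iff (s := s) hδ₀ hδ₁.ne hK hπc hwc hCc hπm.monotoneOn hGm
    hwa.antitoneOn hCa
  rw [optimalR_iff hδ₀ hδ₁.ne hπc hwc hCc hGm hwa.antitoneOn hCa.antitoneOn,
    rpstar_iff hδ₁.ne (by omega)]
  constructor
  · rintro ⟨hp, hsR, hmax⟩
    obtain ⟨hrbe, hfirst⟩ := (hmax_iff hsR).1 hmax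
    exact ⟨hp, hsR.1.mono, hrbe, fun s' hs' h0' hmono' => hfirst s' ⟨hs', h0', hmono'⟩⟩
  · rintro ⟨hp, hmono, hrbe, hfirst⟩
    have hsR := mem_relaxedSet_of_rbe hδ₀.le hδ₁.ne hπm.monotoneOn hCa.antitoneOn
      ⟨hs, h0, hmono⟩ hrbe
    exact ⟨hp, hsR, (hmax_iff hsR).2
      ⟨hrbe, fun s' hs' => hfirst s' hs'.mem_Icc hs'.zero hs'.mono⟩⟩

/-- Retirement program equivalence. -/
theorem retirement_program_equivalence
    (δ : ℝ) (hδ : δ ∈ Set.Ioo (0 : ℝ) 1) (K : ℕ) (hK : 2 ≤ K) (π w C : ℝ → ℝ)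
    (hπc : ContinuousOn π (Set.Icc 0 1)) (hwc : ContinuousOn w (Set.Icc 0 1))
    (hπm : StrictMonoOn π (Set.Icc 0 1)) (hwa : StrictAntiOn w (Set.Icc 0 1))
    (hGm : StrictMonoOn (fun x => π x + w x) (Set.Icc 0 1))
    (hCc : ContinuousOn C (Set.Icc 0 1)) (hCa : StrictAntiOn C (Set.Icc 0 1))
    (hC1 : C 1 = 0)
    (s p : ℕ → ℝ) (hs : ∀ t ≤ K, s t ∈ Set.Icc (0 : ℝ) 1) (h0 : s 0 = 0) :
    OptimalR δ π w C K s p ↔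
      (RPstar δ w K s p ∧ (∀ t < K, s t ≤ s (t + 1)) ∧ RBE δ π w C K s ∧
        ∀ s' : ℕ → ℝ, (∀ t ≤ K, s' t ∈ Set.Icc (0 : ℝ) 1) → s' 0 = 0 →
          (∀ t < K, s' t ≤ s' (t + 1)) → RBE δ π w C K s' → s' 1 ≤ s 1) :=
  retirement_program_equivalence_general δ hδ K hK π w C hπc hwc hπm hwa hGm hCc hCa s p hs h0
end

section
/- Structure of the optimal contract with retirement: there exists a unique optimal contract with retirement (s,p), and it satisfies: (i) 0 = s_0 < s_1 < ⋯ < s_{K−1} < s_K = 1 (gradual and eventually full knowledge transfer); (ii) s_1 is maximal, i.e. for every nondecreasing sequence s′ : {0,…,K} → [0,1] with s′_0 = 0 satisfying (R-BE), one has s′_1 ≤ s_1; (iii) p_0 = 0; (iv) p_t = (1−δ^{K−t})·(w(s_{t−1}) − w(s_t))/(1−δ) for every t ∈ {1,…,K−1}. -/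
open Set Filter

/-!
Binding every (R-E-IC) constraint with the payments `compensation` costs the principal nothing,
so optimal contracts come from maximizing `value s` over the admissible `s`: those for which
(R-P-IC) still holds under these payments. The admissible set is compact, so a maximizer exists.
At a maximizer `s K = 1`, since raising `s K` lowers the catch-up cost, and every (R-P-IC) slack
vanishes, since otherwise `s j` can be raised a little at the last `j` with positive slack.
Vanishing slacks are exactly (R-BE), under which `s (t + 1)` is determined by `s (t - 1)` and
`s t`, and the value is a strictly increasing function of `s 1`. This gives the maximality of
`s 1`, uniqueness, and, as `s 0 ≠ s K`, strict monotonicity.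
-/

open Topology

namespace Retirement

section Definitions

variable (δ : ℝ) (π w C : ℝ → ℝ) (K : ℕ)

/-- `(1 - δ ^ (K - t)) / (1 - δ)`, written as a geometric sum. -/
noncomputable def annuity (t : ℕ) : ℝ := ∑ i ∈ Finset.range (K - t), δ ^ i

/-- The payments that make every (R-E-IC) constraint bind. -/
noncomputable def compensation (s : ℕ → ℝ) (t : ℕ) : ℝ :=
  if t = 0 then 0 else annuity δ K t * (w (s (t - 1)) - w (s t))

noncomputable def surplus (s : ℕ → ℝ) (t : ℕ) : ℝ :=
  ∑ τ ∈ Finset.Ico t K, δ ^ (τ - t) * (π (s τ) + w (s τ)) - δ ^ (K - 1 - t) * C (s K)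

/-- The right-hand side of (R-P-IC) at knowledge level `x`. -/
noncomputable def outside (t : ℕ) (x : ℝ) : ℝ :=
  annuity δ K t * π x - δ ^ (K - 1 - t) * C x

noncomputable def gain (t : ℕ) (x : ℝ) : ℝ :=
  δ * annuity δ K (t + 1) * π x - δ ^ (K - 1 - t) * C x

/-- The slack of (R-P-IC) at `t ≥ 1` under the payments `compensation`. -/
noncomputable def slack (s : ℕ → ℝ) (t : ℕ) : ℝ :=
  surplus δ π w C K s t - annuity δ K t * w (s (t - 1)) - outside δ π C K t (s t)

/-- (R-BE) at `t`, with the denominators `1 - δ` cleared. -/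
noncomputable def residual (s : ℕ → ℝ) (t : ℕ) : ℝ :=
  gain δ π C K t (s (t + 1)) - gain δ π C K t (s t) - annuity δ K t * (w (s (t - 1)) - w (s t))

noncomputable def value (s : ℕ → ℝ) : ℝ := PiR δ π C K s (compensation δ w K s) 0

def unitBox : Set (ℕ → ℝ) := {s | ∀ t ≤ K, s t ∈ Set.Icc 0 1}

structure Admissible (s : ℕ → ℝ) : Prop where
  mem_unitBox : s ∈ unitBox K
  zero : s 0 = 0
  le_succ : ∀ t < K, s t ≤ s (t + 1)
  slack_nonneg : ∀ t, 1 ≤ t → t ≤ K - 1 → 0 ≤ slack δ π w C K s t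

end Definitions

section Annuity

variable {δ : ℝ} {K t : ℕ}

lemma annuity_succ (h : t < K) : annuity δ K t = 1 + δ * annuity δ K (t + 1) := by
  rw [annuity, annuity, show K - t = K - (t + 1) + 1 by omega, geom_sum_succ]
  ring

@[simp] lemma annuity_self : annuity δ K K = 0 := by simp [annuity]

lemma annuity_sub_one (h : 1 ≤ K) : annuity δ K (K - 1) = 1 := by
  simp [annuity, show K - (K - 1) = 1 by omega]

lemma annuity_nonneg (hδ : 0 ≤ δ) : 0 ≤ annuity δ K t :=
  Finset.sum_nonneg fun i _ => pow_nonneg hδ i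

lemma annuity_pos (hδ : 0 < δ) (h : t < K) : 0 < annuity δ K t :=
  Finset.sum_pos (fun i _ => pow_pos hδ i) (Finset.nonempty_range_iff.2 (by omega))

lemma annuity_eq_div (hδ : δ ≠ 1) : annuity δ K t = (1 - δ ^ (K - t)) / (1 - δ) := by
  rw [annuity, geom_sum_eq hδ, ← neg_div_neg_eq, neg_sub, neg_sub]

lemma annuity_mul_eq_div (hδ : δ ≠ 1) (x : ℝ) :
    annuity δ K t * x = (1 - δ ^ (K - t)) * x / (1 - δ) := by
  rw [annuity_eq_div hδ, mul_div_right_comm]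

lemma sum_Ico_pow_mul_const (c : ℝ) :
    ∑ τ ∈ Finset.Ico t K, δ ^ (τ - t) * c = annuity δ K t * c := by
  rw [Finset.sum_Ico_eq_sum_range, annuity, Finset.sum_mul]
  exact Finset.sum_congr rfl fun i _ => by rw [Nat.add_sub_cancel_left]

lemma sum_Ico_pow_mul_succ (f : ℕ → ℝ) (h : t < K) :
    ∑ τ ∈ Finset.Ico t K, δ ^ (τ - t) * f τ
      = f t + δ * ∑ τ ∈ Finset.Ico (t + 1) K, δ ^ (τ - (t + 1)) * f τ := by
  rw [Finset.sum_eq_sum_Ico_succ_bot h, Nat.sub_self, pow_zero, one_mul, Finset.mul_sum]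
  refine congrArg _ (Finset.sum_congr rfl fun τ hτ => ?_)
  rw [show τ - t = τ - (t + 1) + 1 by grind, pow_succ]
  ring

end Annuity

section Payoffs

variable {δ : ℝ} {π w C : ℝ → ℝ} {K : ℕ} {s p : ℕ → ℝ} {t : ℕ}

lemma WR_succ (h : t < K) : WR δ w K s p t = w (s t) + p t + δ * WR δ w K s p (t + 1) := by
  rw [WR, WR, sum_Ico_pow_mul_succ _ h, add_assoc]

lemma PiR_succ (h : t + 1 < K) :
    PiR δ π C K s p t = π (s t) - p t + δ * PiR δ π C K s p (t + 1) := by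
  rw [PiR, PiR, sum_Ico_pow_mul_succ _ (by omega), show K - 1 - t = K - 1 - (t + 1) + 1 by omega,
    pow_succ]
  ring

lemma surplus_succ (h : t + 1 < K) :
    surplus δ π w C K s t = π (s t) + w (s t) + δ * surplus δ π w C K s (t + 1) := by
  rw [surplus, surplus, sum_Ico_pow_mul_succ _ (by omega),
    show K - 1 - t = K - 1 - (t + 1) + 1 by omega, pow_succ]
  ring

lemma PiR_zero (hK : 2 ≤ K) : PiR δ π C K s p 0 = π (s 0) - p 0 + δ * PiR δ π C K s p 1 :=
  PiR_succ (by omega)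

lemma PiR_eq_surplus_sub_WR : PiR δ π C K s p t = surplus δ π w C K s t - WR δ w K s p t := by
  rw [PiR, WR, surplus, eq_sub_iff_add_eq, sub_add_eq_add_sub, ← Finset.sum_add_distrib]
  congr 1
  exact Finset.sum_congr rfl fun τ _ => by ring

lemma compensation_zero : compensation δ w K s 0 = 0 := if_pos rfl

lemma WR_compensation (h1 : 1 ≤ t) (hK : t ≤ K) :
    WR δ w K s (compensation δ w K s) t = annuity δ K t * w (s (t - 1)) := by
  induction hK using Nat.decreasingInduction with
  | self => simp [WR]
  | of_succ t ht ih =>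
    rw [WR_succ ht, ih (by omega), compensation, if_neg (by omega), Nat.add_sub_cancel,
      annuity_succ ht]
    ring

lemma PiR_compensation (h1 : 1 ≤ t) (hK : t ≤ K) :
    PiR δ π C K s (compensation δ w K s) t
      = surplus δ π w C K s t - annuity δ K t * w (s (t - 1)) := by
  rw [PiR_eq_surplus_sub_WR (w := w), WR_compensation h1 hK]

lemma value_eq_surplus (hK : 2 ≤ K) :
    value δ π w C K s = π (s 0) + δ * (surplus δ π w C K s 1 - annuity δ K 1 * w (s 0)) := by
  rw [value, PiR_zero hK, PiR_compensation le_rfl (by omega), compensation_zero, sub_zero]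

lemma value_eq_slack (hK : 2 ≤ K) :
    value δ π w C K s = π (s 0) + δ * slack δ π w C K s 1 + gain δ π C K 0 (s 1) := by
  rw [value_eq_surplus hK, slack, outside, gain, show K - 1 - 0 = K - 1 - 1 + 1 by omega, pow_succ]
  ring

lemma slack_eq_residual_add (h : t + 1 < K) :
    slack δ π w C K s t = residual δ π w C K s t + δ * slack δ π w C K s (t + 1) := by
  simp only [slack, residual, outside, gain]
  rw [surplus_succ h, Nat.add_sub_cancel, annuity_succ (by omega : t < K),
    show K - 1 - t = K - 1 - (t + 1) + 1 by omega, pow_succ]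
  ring

lemma slack_sub_one (hK : 2 ≤ K) :
    slack δ π w C K s (K - 1) = residual δ π w C K s (K - 1) := by
  simp only [slack, residual, surplus, outside, gain]
  rw [sum_Ico_pow_mul_succ _ (by omega), Nat.sub_add_cancel (by omega), annuity_sub_one (by omega),
    annuity_self, Nat.sub_self]
  simp only [Finset.Ico_self, Finset.sum_empty, pow_zero]
  ring

end Payoffs

section BreakEven

variable {δ : ℝ} {π w C : ℝ → ℝ} {K : ℕ} {s : ℕ → ℝ} {t : ℕ}

lemma gain_monotoneOn (hδ : 0 ≤ δ) (hπ : MonotoneOn π (Set.Icc 0 1))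
    (hC : AntitoneOn C (Set.Icc 0 1)) : MonotoneOn (gain δ π C K t) (Set.Icc 0 1) :=
  fun _ hx _ hy hxy => sub_le_sub
    (mul_le_mul_of_nonneg_left (hπ hx hy hxy) (mul_nonneg hδ (annuity_nonneg hδ)))
    (mul_le_mul_of_nonneg_left (hC hx hy hxy) (pow_nonneg hδ _))

lemma gain_strictMonoOn (hδ : 0 < δ) (hπ : MonotoneOn π (Set.Icc 0 1))
    (hC : StrictAntiOn C (Set.Icc 0 1)) : StrictMonoOn (gain δ π C K t) (Set.Icc 0 1) :=
  fun _ hx _ hy hxy =>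
    (sub_le_sub_right (mul_le_mul_of_nonneg_left (hπ hx hy hxy.le)
      (mul_nonneg hδ.le (annuity_nonneg hδ.le))) _).trans_lt
    (sub_lt_sub_left (mul_lt_mul_of_pos_left (hC hx hy hxy) (pow_pos hδ _)) _)

lemma rbe_iff (hδ : δ ≠ 1) :
    RBE δ π w C K s ↔ ∀ t, 1 ≤ t → t ≤ K - 1 → residual δ π w C K s t = 0 := by
  refine forall_congr' fun t => forall_congr' fun h1 => forall_congr' fun h2 => ?_
  have hgain : (δ - δ ^ (K - t)) * (π (s (t + 1)) - π (s t)) / (1 - δ)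
      = δ * annuity δ K (t + 1) * (π (s (t + 1)) - π (s t)) := by
    rw [mul_assoc, annuity_mul_eq_div hδ, show K - t = K - (t + 1) + 1 by omega, pow_succ']
    ring
  rw [hgain, ← annuity_mul_eq_div hδ, residual, gain, gain]
  constructor <;> intro h <;> linarith

lemma residual_eq_slack (hK : 2 ≤ K) (ht : t ≤ K - 1)
    (hnext : t + 1 ≤ K - 1 → slack δ π w C K s (t + 1) = 0) :
    residual δ π w C K s t = slack δ π w C K s t := by
  rcases (show t + 1 < K ∨ t = K - 1 by omega) with h | rfl
  · rw [slack_eq_residual_add h, hnext (by omega), mul_zero, add_zero]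
  · exact (slack_sub_one hK).symm

lemma slack_eq_zero_iff (hK : 2 ≤ K) :
    (∀ t, 1 ≤ t → t ≤ K - 1 → slack δ π w C K s t = 0) ↔
      ∀ t, 1 ≤ t → t ≤ K - 1 → residual δ π w C K s t = 0 := by
  refine ⟨fun h t h1 h2 => ?_, fun h t h1 h2 => ?_⟩
  · rw [residual_eq_slack hK h2 fun h' => h _ (by omega) h', h t h1 h2]
  · induction h2 using Nat.decreasingInduction with
    | self => rw [← residual_eq_slack hK le_rfl (by omega)]; exact h _ h1 le_rfl
    | of_succ t ht ih =>
      rw [← residual_eq_slack hK ht.le fun _ => ih (by omega)]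
      exact h t h1 ht.le

end BreakEven

section Implementability

variable {δ : ℝ} {π w C : ℝ → ℝ} {K : ℕ} {s p : ℕ → ℝ} {t : ℕ}

lemma outside_zero (hK : 1 ≤ K) (x : ℝ) :
    outside δ π C K 0 x = π x + gain δ π C K 0 x := by
  rw [outside, gain, annuity_succ (by omega)]
  ring

lemma compensation_nonneg (hδ : 0 ≤ δ) (hw : AntitoneOn w (Set.Icc 0 1)) (hs : s ∈ unitBox K)
    (hmono : ∀ t < K, s t ≤ s (t + 1)) (ht : t < K) : 0 ≤ compensation δ w K s t := by
  unfold compensation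
  split_ifs with h0
  · exact le_rfl
  · have hle : s (t - 1) ≤ s t := by
      simpa only [Nat.sub_add_cancel (by omega : 1 ≤ t)] using hmono (t - 1) (by omega)
    exact mul_nonneg (annuity_nonneg hδ) (sub_nonneg.2 (hw (hs _ (by omega)) (hs _ ht.le) hle))

lemma WR_compensation_le (hδ : δ ≠ 1) (h : ImplementableR δ π w C K s p) (h1 : 1 ≤ t)
    (h2 : t ≤ K - 1) : WR δ w K s (compensation δ w K s) t ≤ WR δ w K s p t := by
  have ⟨_, _, _, _, _, hEIC⟩ := h
  have hE := hEIC (t - 1) (by omega)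
  rwa [Nat.sub_sub, Nat.sub_add_cancel h1, ← annuity_mul_eq_div hδ,
    ← WR_compensation h1 (by omega)] at hE

lemma PiR_le_PiR_compensation (hδ : δ ≠ 1) (h : ImplementableR δ π w C K s p) (h1 : 1 ≤ t)
    (h2 : t ≤ K - 1) : PiR δ π C K s p t ≤ PiR δ π C K s (compensation δ w K s) t := by
  rw [PiR_eq_surplus_sub_WR (w := w), PiR_eq_surplus_sub_WR (w := w)]
  linarith [WR_compensation_le hδ h h1 h2]

lemma PiR_le_value (hδ : δ ∈ Set.Ioo 0 1) (hK : 2 ≤ K) (h : ImplementableR δ π w C K s p) :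
    PiR δ π C K s p 0 ≤ value δ π w C K s := by
  have ⟨_, _, _, hp, _, _⟩ := h
  rw [value, PiR_zero hK, PiR_zero hK, compensation_zero]
  have h1 := mul_le_mul_of_nonneg_left
    (PiR_le_PiR_compensation hδ.2.ne h le_rfl (by omega)) hδ.1.le
  linarith [hp 0 (by omega)]

lemma admissible_of_implementableR (hδ : δ ≠ 1) (h : ImplementableR δ π w C K s p) :
    Admissible δ π w C K s := by
  have ⟨hbox, h0, hmono, _, hPIC, _⟩ := h
  refine ⟨hbox, h0, hmono, fun t h1 h2 => ?_⟩
  have hP := hPIC t (by omega)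
  rw [← annuity_mul_eq_div hδ] at hP
  have := PiR_le_PiR_compensation hδ h h1 h2
  rw [PiR_compensation h1 (by omega)] at this
  rw [slack, outside]
  linarith

lemma implementableR_compensation (hδ : δ ∈ Set.Ioo 0 1) (hK : 2 ≤ K)
    (hπ : MonotoneOn π (Set.Icc 0 1)) (hw : AntitoneOn w (Set.Icc 0 1))
    (hC : AntitoneOn C (Set.Icc 0 1)) (hs : Admissible δ π w C K s) :
    ImplementableR δ π w C K s (compensation δ w K s) := by
  refine ⟨hs.mem_unitBox, hs.zero, hs.le_succ,
    fun t ht => compensation_nonneg hδ.1.le hw hs.mem_unitBox hs.le_succ ht, fun t ht => ?_,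
    fun t ht => ?_⟩
  · rw [← annuity_mul_eq_div hδ.2.ne, ← outside]
    rcases Nat.eq_zero_or_pos t with rfl | h1
    · rw [← value, value_eq_slack hK, outside_zero (by omega)]
      have := gain_monotoneOn (K := K) (t := 0) hδ.1.le hπ hC (hs.mem_unitBox 0 (by omega))
        (hs.mem_unitBox 1 (by omega)) (hs.le_succ 0 (by omega))
      linarith [mul_nonneg hδ.1.le (hs.slack_nonneg 1 le_rfl (by omega))]
    · rw [PiR_compensation h1 ht.le]
      have := hs.slack_nonneg t h1 (by omega)
      rw [slack] at this
      linarith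
  · rw [WR_compensation (by omega) (by omega), Nat.sub_sub, annuity_mul_eq_div hδ.2.ne,
      Nat.add_sub_cancel]

lemma eq_compensation_of_implementableR (hδ : δ ∈ Set.Ioo 0 1) (hK : 2 ≤ K)
    (h : ImplementableR δ π w C K s p)
    (hslack : ∀ t, 1 ≤ t → t ≤ K - 1 → slack δ π w C K s t = 0)
    (hval : value δ π w C K s ≤ PiR δ π C K s p 0) :
    ∀ t < K, p t = compensation δ w K s t := by
  have ⟨_, _, _, hp, hPIC, _⟩ := h
  have hPiR : ∀ t, 1 ≤ t → t ≤ K - 1 →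
      PiR δ π C K s p t = PiR δ π C K s (compensation δ w K s) t := fun t h1 h2 => by
    have hP := hPIC t (by omega)
    rw [← annuity_mul_eq_div hδ.2.ne, ← outside] at hP
    have := hslack t h1 h2
    rw [slack, ← PiR_compensation h1 (by omega)] at this
    exact le_antisymm (PiR_le_PiR_compensation hδ.2.ne h h1 h2) (by linarith)
  have hWR : ∀ t, 1 ≤ t → t ≤ K →
      WR δ w K s p t = WR δ w K s (compensation δ w K s) t := fun t h1 h2 => by
    rcases (show t ≤ K - 1 ∨ t = K by omega) with h2 | rfl
    · have := hPiR t h1 h2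
      rw [PiR_eq_surplus_sub_WR (w := w), PiR_eq_surplus_sub_WR (w := w)] at this
      linarith
    · simp [WR]
  intro t ht
  rcases Nat.eq_zero_or_pos t with rfl | h1
  · rw [value, PiR_zero hK, PiR_zero hK, hPiR 1 le_rfl (by omega)] at hval
    rw [compensation_zero] at hval ⊢
    exact le_antisymm (by linarith) (hp 0 ht)
  · have hWp := WR_succ (δ := δ) (w := w) (s := s) (p := p) ht
    have hWq := WR_succ (δ := δ) (w := w) (s := s) (p := compensation δ w K s) ht
    rw [hWR t h1 ht.le, hWR (t + 1) (by omega) ht] at hWp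
    linarith

end Implementability

section BreakEvenSequences

variable {δ : ℝ} {π w C : ℝ → ℝ} {K : ℕ} {s s' : ℕ → ℝ} {t : ℕ}

lemma succ_eq_iff_eq_pred (hδ : 0 < δ) (hπ : MonotoneOn π (Set.Icc 0 1))
    (hw : StrictAntiOn w (Set.Icc 0 1)) (hC : StrictAntiOn C (Set.Icc 0 1)) (hs : s ∈ unitBox K)
    (h1 : 1 ≤ t) (ht : t < K) (hres : residual δ π w C K s t = 0) :
    s (t + 1) = s t ↔ s t = s (t - 1) := by
  rw [residual, sub_sub, sub_eq_zero] at hres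
  constructor
  · intro h
    rw [h, left_eq_add, mul_eq_zero, sub_eq_zero] at hres
    exact (hw.injOn (hs _ (by omega)) (hs _ ht.le)
      (hres.resolve_left (annuity_pos hδ ht).ne')).symm
  · intro h
    rw [h, sub_self, mul_zero, add_zero] at hres
    rw [h]
    exact (gain_strictMonoOn hδ hπ hC).injOn (hs _ ht) (hs _ (by omega)) hres

lemma strictMono_of_residual_eq_zero (hδ : 0 < δ) (hπ : MonotoneOn π (Set.Icc 0 1))
    (hw : StrictAntiOn w (Set.Icc 0 1)) (hC : StrictAntiOn C (Set.Icc 0 1)) (hs : s ∈ unitBox K)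
    (hmono : ∀ t < K, s t ≤ s (t + 1))
    (hres : ∀ t, 1 ≤ t → t ≤ K - 1 → residual δ π w C K s t = 0) (hne : s 0 ≠ s K) :
    ∀ t < K, s t < s (t + 1) := by
  have hflat : ∀ t < K, s (t + 1) = s t ↔ s 1 = s 0 := by
    intro t ht
    induction t with
    | zero => rfl
    | succ t ih =>
      rw [succ_eq_iff_eq_pred hδ hπ hw hC hs (by omega) ht (hres _ (by omega) (by omega)),
        Nat.add_sub_cancel]
      exact ih (by omega)
  intro t ht
  refine (hmono t ht).lt_of_ne fun h => hne ?_
  have hconst : ∀ u ≤ K, s u = s 0 := by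
    intro u hu
    induction u with
    | zero => rfl
    | succ u ih => rw [(hflat u hu).2 ((hflat t ht).1 h.symm), ih (by omega)]
  exact (hconst K le_rfl).symm

lemma eqOn_of_residual_eq_zero (hδ : 0 < δ) (hπ : MonotoneOn π (Set.Icc 0 1))
    (hC : StrictAntiOn C (Set.Icc 0 1)) (hs : s ∈ unitBox K) (hs' : s' ∈ unitBox K)
    (hres : ∀ t, 1 ≤ t → t ≤ K - 1 → residual δ π w C K s t = 0)
    (hres' : ∀ t, 1 ≤ t → t ≤ K - 1 → residual δ π w C K s' t = 0)
    (h0 : s 0 = s' 0) (h1 : s 1 = s' 1) : ∀ t ≤ K, s t = s' t := by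
  have hpair : ∀ t, t + 1 ≤ K → s t = s' t ∧ s (t + 1) = s' (t + 1) := by
    intro t ht
    induction t with
    | zero => exact ⟨h0, h1⟩
    | succ t ih =>
      obtain ⟨e0, e1⟩ := ih (by omega)
      refine ⟨e1, (gain_strictMonoOn (K := K) (t := t + 1) hδ hπ hC).injOn
        (hs _ ht) (hs' _ ht) ?_⟩
      have hr := hres (t + 1) (by omega) (by omega)
      have hr' := hres' (t + 1) (by omega) (by omega)
      rw [residual, Nat.add_sub_cancel, e0, e1] at hr
      rw [residual, Nat.add_sub_cancel] at hr'
      linarith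
  intro t ht
  cases t with
  | zero => exact h0
  | succ t => exact (hpair t ht).2

end BreakEvenSequences

section Comparison

variable {δ : ℝ} {π w C : ℝ → ℝ} {K : ℕ} {s s' : ℕ → ℝ} {t j : ℕ} {x : ℝ}

lemma surplus_le_surplus (hδ : 0 ≤ δ) (hG : MonotoneOn (fun x => π x + w x) (Set.Icc 0 1))
    (hC : AntitoneOn C (Set.Icc 0 1)) (hs : s ∈ unitBox K) (hs' : s' ∈ unitBox K)
    (hle : ∀ τ ≤ K, s τ ≤ s' τ) :
    surplus δ π w C K s t ≤ surplus δ π w C K s' t := by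
  refine sub_le_sub (Finset.sum_le_sum fun τ hτ => ?_) ?_
  · have hτ : τ ≤ K := (Finset.mem_Ico.1 hτ).2.le
    exact mul_le_mul_of_nonneg_left (hG (hs τ hτ) (hs' τ hτ) (hle τ hτ)) (pow_nonneg hδ _)
  · exact mul_le_mul_of_nonneg_left (hC (hs K le_rfl) (hs' K le_rfl) (hle K le_rfl))
      (pow_nonneg hδ _)

lemma surplus_lt_surplus (hδ : 0 < δ) (hG : StrictMonoOn (fun x => π x + w x) (Set.Icc 0 1))
    (hC : StrictAntiOn C (Set.Icc 0 1)) (hs : s ∈ unitBox K) (hs' : s' ∈ unitBox K)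
    (hle : ∀ τ ≤ K, s τ ≤ s' τ) (htj : t ≤ j) (hjK : j ≤ K) (htK : t < K)
    (hlt : s j < s' j) :
    surplus δ π w C K s t < surplus δ π w C K s' t := by
  have hterm : ∀ τ ≤ K,
      δ ^ (τ - t) * (π (s τ) + w (s τ)) ≤ δ ^ (τ - t) * (π (s' τ) + w (s' τ)) :=
    fun τ hτ => mul_le_mul_of_nonneg_left (hG.monotoneOn (hs τ hτ) (hs' τ hτ) (hle τ hτ))
      (pow_nonneg hδ.le _)
  rw [surplus, surplus]
  rcases hjK.lt_or_eq with hjK | rfl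
  · have := Finset.sum_lt_sum (fun τ hτ => hterm τ (Finset.mem_Ico.1 hτ).2.le)
      ⟨j, Finset.mem_Ico.2 ⟨htj, hjK⟩,
        mul_lt_mul_of_pos_left (hG (hs j hjK.le) (hs' j hjK.le) hlt) (pow_pos hδ _)⟩
    have := mul_le_mul_of_nonneg_left (hC.antitoneOn (hs K le_rfl) (hs' K le_rfl) (hle K le_rfl))
      (pow_nonneg hδ.le (K - 1 - t))
    linarith
  · have := Finset.sum_le_sum (s := Finset.Ico t j) fun τ hτ =>
      hterm τ (Finset.mem_Ico.1 hτ).2.le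
    have := mul_lt_mul_of_pos_left (hC (hs _ le_rfl) (hs' _ le_rfl) hlt) (pow_pos hδ (j - 1 - t))
    linarith

lemma slack_le_slack (hδ : 0 ≤ δ) (hG : MonotoneOn (fun x => π x + w x) (Set.Icc 0 1))
    (hw : AntitoneOn w (Set.Icc 0 1)) (hC : AntitoneOn C (Set.Icc 0 1)) (hs : s ∈ unitBox K)
    (hs' : s' ∈ unitBox K) (hle : ∀ τ ≤ K, s τ ≤ s' τ) (ht : t ≤ K)
    (heq : s t = s' t) :
    slack δ π w C K s t ≤ slack δ π w C K s' t := by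
  have hsur := surplus_le_surplus (t := t) hδ hG hC hs hs' hle
  have hwt := mul_le_mul_of_nonneg_left
    (hw (hs (t - 1) (by omega)) (hs' (t - 1) (by omega)) (hle (t - 1) (by omega)))
    (annuity_nonneg (K := K) (t := t) hδ)
  rw [slack, slack, heq]
  linarith

lemma value_lt_value (hδ : 0 < δ) (hK : 2 ≤ K)
    (hG : StrictMonoOn (fun x => π x + w x) (Set.Icc 0 1)) (hC : StrictAntiOn C (Set.Icc 0 1))
    (hs : s ∈ unitBox K) (hs' : s' ∈ unitBox K) (hle : ∀ τ ≤ K, s τ ≤ s' τ)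
    (h0 : s 0 = s' 0) (hj1 : 1 ≤ j) (hjK : j ≤ K) (hlt : s j < s' j) :
    value δ π w C K s < value δ π w C K s' := by
  rw [value_eq_surplus hK, value_eq_surplus hK, h0]
  have := surplus_lt_surplus hδ hG hC hs hs' hle hj1 hjK (by omega) hlt
  linarith [mul_lt_mul_of_pos_left this hδ]

lemma update_mem_unitBox (hs : s ∈ unitBox K) (hx : x ∈ Set.Icc 0 1) :
    Function.update s j x ∈ unitBox K := by
  intro t ht
  rcases eq_or_ne t j with rfl | h
  · rwa [Function.update_self]
  · rw [Function.update_of_ne h]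
    exact hs t ht

lemma Admissible.update (hδ : 0 ≤ δ) (hG : MonotoneOn (fun x => π x + w x) (Set.Icc 0 1))
    (hw : AntitoneOn w (Set.Icc 0 1)) (hC : AntitoneOn C (Set.Icc 0 1))
    (hs : Admissible δ π w C K s) (hj1 : 1 ≤ j) (hjK : j ≤ K) (hx : x ≤ 1) (hjx : s j ≤ x)
    (hnext : j < K → x ≤ s (j + 1))
    (hslack : j ≤ K - 1 → 0 ≤ slack δ π w C K (Function.update s j x) j) :
    Admissible δ π w C K (Function.update s j x) := by
  have hbox :=
    update_mem_unitBox (j := j) hs.mem_unitBox ⟨(hs.mem_unitBox j hjK).1.trans hjx, hx⟩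
  have hle : ∀ τ ≤ K, s τ ≤ Function.update s j x τ :=
    fun τ _ => le_update_iff.2 ⟨hjx, fun _ _ => le_rfl⟩ τ
  refine ⟨hbox, by rw [Function.update_of_ne (by omega), hs.zero], fun t ht => ?_,
    fun t h1 h2 => ?_⟩
  · rcases eq_or_ne t j with rfl | htj
    · rw [Function.update_self, Function.update_of_ne (by omega)]
      exact hnext ht
    · rw [Function.update_of_ne htj]
      exact (hs.le_succ t ht).trans (hle _ (by omega))
  · rcases eq_or_ne t j with rfl | htj
    · exact hslack h2
    · exact (hs.slack_nonneg t h1 h2).trans (slack_le_slack hδ hG hw hC hs.mem_unitBox hbox hle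
        (by omega) (Function.update_of_ne htj ..).symm)

end Comparison

section Existence

variable {δ : ℝ} {π w C : ℝ → ℝ} {K : ℕ} {s s' : ℕ → ℝ} {t : ℕ}

lemma surplus_congr (h : ∀ τ ≤ K, s τ = s' τ) :
    surplus δ π w C K s t = surplus δ π w C K s' t := by
  rw [surplus, surplus, h K le_rfl]
  congr 1
  exact Finset.sum_congr rfl fun τ hτ => by rw [h τ (Finset.mem_Ico.1 hτ).2.le]

lemma slack_congr (h : ∀ τ ≤ K, s τ = s' τ) (ht : t ≤ K) :
    slack δ π w C K s t = slack δ π w C K s' t := by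
  rw [slack, slack, surplus_congr h, h t ht, h (t - 1) (by omega)]

lemma value_congr (hK : 2 ≤ K) (h : ∀ τ ≤ K, s τ = s' τ) :
    value δ π w C K s = value δ π w C K s' := by
  rw [value_eq_surplus hK, value_eq_surplus hK, surplus_congr h, h 0 (by omega)]

lemma compensation_congr (h : ∀ τ ≤ K, s τ = s' τ) (ht : t ≤ K) :
    compensation δ w K s t = compensation δ w K s' t := by
  rw [compensation, compensation, h t ht, h (t - 1) (by omega)]

lemma Admissible.congr (hs : Admissible δ π w C K s) (h : ∀ τ ≤ K, s τ = s' τ) :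
    Admissible δ π w C K s' where
  mem_unitBox t ht := h t ht ▸ hs.mem_unitBox t ht
  zero := h 0 (by omega) ▸ hs.zero
  le_succ t ht := by rw [← h t ht.le, ← h (t + 1) ht]; exact hs.le_succ t ht
  slack_nonneg t h1 h2 := slack_congr (t := t) h (by omega) ▸ hs.slack_nonneg t h1 h2

lemma admissible_zero : Admissible δ π w C K 0 where
  mem_unitBox _ _ := ⟨le_rfl, zero_le_one⟩
  zero := rfl
  le_succ _ _ := le_rfl
  slack_nonneg t _ _ := by
    simp only [slack, surplus, outside, Pi.zero_apply, sum_Ico_pow_mul_const]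
    ring_nf
    rfl

lemma isClosed_unitBox : IsClosed (unitBox K) := by
  simp only [unitBox, Set.ofPred_forall]
  exact isClosed_iInter fun t => isClosed_iInter fun _ => isClosed_Icc.preimage (continuous_apply t)

lemma continuousOn_comp_apply {f : ℝ → ℝ} (hf : ContinuousOn f (Set.Icc 0 1))
    (ht : t ≤ K) : ContinuousOn (fun s : ℕ → ℝ => f (s t)) (unitBox K) :=
  hf.comp (continuous_apply t).continuousOn fun _ hs => hs t ht

lemma continuousOn_surplus (hπ : ContinuousOn π (Set.Icc 0 1))
    (hw : ContinuousOn w (Set.Icc 0 1)) (hC : ContinuousOn C (Set.Icc 0 1)) :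
    ContinuousOn (fun s => surplus δ π w C K s t) (unitBox K) := by
  refine (continuousOn_finsetSum _ fun τ hτ => ?_).sub
    (continuousOn_const.mul (continuousOn_comp_apply hC le_rfl))
  have hτ : τ ≤ K := (Finset.mem_Ico.1 hτ).2.le
  exact continuousOn_const.mul
    ((continuousOn_comp_apply hπ hτ).add (continuousOn_comp_apply hw hτ))

lemma continuousOn_slack (hπ : ContinuousOn π (Set.Icc 0 1))
    (hw : ContinuousOn w (Set.Icc 0 1)) (hC : ContinuousOn C (Set.Icc 0 1)) (ht : t ≤ K) :
    ContinuousOn (fun s => slack δ π w C K s t) (unitBox K) :=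
  ((continuousOn_surplus hπ hw hC).sub
    (continuousOn_const.mul (continuousOn_comp_apply hw (by omega)))).sub
    ((continuousOn_const.mul (continuousOn_comp_apply hπ ht)).sub
      (continuousOn_const.mul (continuousOn_comp_apply hC ht)))

lemma continuousOn_value (hK : 2 ≤ K) (hπ : ContinuousOn π (Set.Icc 0 1))
    (hw : ContinuousOn w (Set.Icc 0 1)) (hC : ContinuousOn C (Set.Icc 0 1)) :
    ContinuousOn (value δ π w C K) (unitBox K) := by
  refine ContinuousOn.congr ?_ fun s _ => value_eq_surplus (s := s) hK
  exact (continuousOn_comp_apply hπ (by omega)).add (continuousOn_const.mul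
    ((continuousOn_surplus hπ hw hC).sub
      (continuousOn_const.mul (continuousOn_comp_apply hw (by omega)))))

lemma isClosed_setOf_admissible (hπ : ContinuousOn π (Set.Icc 0 1))
    (hw : ContinuousOn w (Set.Icc 0 1)) (hC : ContinuousOn C (Set.Icc 0 1)) :
    IsClosed {s | Admissible δ π w C K s} := by
  have hset : {s | Admissible δ π w C K s} = unitBox K ∩ {s | s 0 = 0} ∩
      (⋂ t ∈ Set.Iio K, {s | s t ≤ s (t + 1)}) ∩
      ⋂ t ∈ Set.Icc 1 (K - 1), {s ∈ unitBox K | 0 ≤ slack δ π w C K s t} := by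
    ext s
    simp only [Set.mem_ofPred_eq, Set.mem_inter_iff, Set.mem_iInter, Set.mem_Iio, Set.mem_Icc]
    exact ⟨fun hs => ⟨⟨⟨hs.mem_unitBox, hs.zero⟩, hs.le_succ⟩,
        fun t ht => ⟨hs.mem_unitBox, hs.slack_nonneg t ht.1 ht.2⟩⟩,
      fun ⟨⟨⟨hb, h0⟩, hm⟩, hsl⟩ =>
        ⟨hb, h0, hm, fun t h1 h2 => (hsl t ⟨h1, h2⟩).2⟩⟩
  rw [hset]
  refine ((isClosed_unitBox.inter (isClosed_eq (continuous_apply 0) continuous_const)).inter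
    (isClosed_biInter fun t _ => isClosed_le (continuous_apply t) (continuous_apply _))).inter
    (isClosed_biInter fun t ht => ?_)
  exact isClosed_unitBox.isClosed_le continuousOn_const
    (continuousOn_slack hπ hw hC (by simp only [Set.mem_Icc] at ht; omega))

lemma exists_isMaxOn_value (hK : 2 ≤ K) (hπ : ContinuousOn π (Set.Icc 0 1))
    (hw : ContinuousOn w (Set.Icc 0 1)) (hC : ContinuousOn C (Set.Icc 0 1)) :
    ∃ s, Admissible δ π w C K s ∧
      IsMaxOn (value δ π w C K) {s | Admissible δ π w C K s} s := by
  have hcompact :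
      IsCompact ((Set.univ.pi fun _ => Set.Icc 0 1) ∩ {s | Admissible δ π w C K s}) :=
    (isCompact_univ_pi fun _ => isCompact_Icc).inter_right (isClosed_setOf_admissible hπ hw hC)
  obtain ⟨s, ⟨-, hs⟩, hmax⟩ := hcompact.exists_isMaxOn
    ⟨0, fun _ _ => ⟨le_rfl, zero_le_one⟩, admissible_zero⟩
    ((continuousOn_value hK hπ hw hC).mono fun s hs => hs.2.mem_unitBox)
  refine ⟨s, hs, isMaxOn_iff.2 fun s' hs' => ?_⟩
  -- `s'` is only constrained on `[0, K]`; freeze it beyond `K` to land in the compact cube.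
  have htrunc : ∀ τ ≤ K, s' τ = s' (min τ K) := fun τ hτ => by rw [min_eq_left hτ]
  rw [value_congr hK htrunc]
  exact isMaxOn_iff.1 hmax _
    ⟨fun τ _ => hs'.mem_unitBox _ (min_le_right _ _), hs'.congr htrunc⟩

end Existence

section Maximizers

variable {δ : ℝ} {π w C : ℝ → ℝ} {K : ℕ} {s : ℕ → ℝ} {t j : ℕ}

lemma eq_one_of_isMaxOn (hδ : 0 < δ) (hK : 2 ≤ K)
    (hG : StrictMonoOn (fun x => π x + w x) (Set.Icc 0 1)) (hw : AntitoneOn w (Set.Icc 0 1))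
    (hC : StrictAntiOn C (Set.Icc 0 1)) (hs : Admissible δ π w C K s)
    (hmax : IsMaxOn (value δ π w C K) {s | Admissible δ π w C K s} s) : s K = 1 := by
  by_contra hne
  have hlt : s K < 1 := (hs.mem_unitBox K le_rfl).2.lt_of_ne hne
  have hs' := hs.update hδ.le hG.monotoneOn hw hC.antitoneOn (by omega) le_rfl le_rfl hlt.le
    (fun h => absurd h (lt_irrefl K)) (fun h => absurd h (by omega))
  refine (isMaxOn_iff.1 hmax _ hs').not_gt (value_lt_value hδ hK hG hC hs.mem_unitBox
    hs'.mem_unitBox (fun τ _ => le_update_iff.2 ⟨hlt.le, fun _ _ => le_rfl⟩ τ)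
    (Function.update_of_ne (by omega) ..).symm (by omega) le_rfl ?_)
  rwa [Function.update_self]

lemma exists_mem_Ioc_pos {f : ℝ → ℝ} {a b : ℝ} (hab : a < b)
    (hf : ContinuousWithinAt f (Set.Ioc a b) a) (ha : 0 < f a) :
    ∃ x ∈ Set.Ioc a b, 0 < f x := by
  have hev : ∀ᶠ x in 𝓝[Set.Ioc a b] a, x ∈ Set.Ioc a b ∧ 0 < f x :=
    eventually_mem_nhdsWithin.and (hf.eventually (lt_mem_nhds ha))
  rw [nhdsWithin_Ioc_eq_nhdsGT hab] at hev
  exact hev.exists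

lemma lt_succ_of_residual_pos (hδ : 0 ≤ δ) (hw : AntitoneOn w (Set.Icc 0 1))
    (hs : s ∈ unitBox K) (hmono : ∀ t < K, s t ≤ s (t + 1)) (h1 : 1 ≤ t) (ht : t < K)
    (hres : 0 < residual δ π w C K s t) : s t < s (t + 1) := by
  refine (hmono t ht).lt_of_ne fun h => ?_
  have hpay := compensation_nonneg hδ hw hs hmono ht
  rw [residual, ← h, sub_self, zero_sub] at hres
  rw [compensation, if_neg (by omega)] at hpay
  linarith

/-- A positive residual forces `s j < s (j + 1)`, so `s j` can be raised a little without losing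
admissibility, which would strictly increase the value. -/
lemma slack_eq_zero_of_residual_eq_slack (hδ : 0 < δ) (hK : 2 ≤ K)
    (hπc : ContinuousOn π (Set.Icc 0 1)) (hwc : ContinuousOn w (Set.Icc 0 1))
    (hCc : ContinuousOn C (Set.Icc 0 1)) (hG : StrictMonoOn (fun x => π x + w x) (Set.Icc 0 1))
    (hw : AntitoneOn w (Set.Icc 0 1)) (hC : StrictAntiOn C (Set.Icc 0 1))
    (hs : Admissible δ π w C K s)
    (hmax : IsMaxOn (value δ π w C K) {s | Admissible δ π w C K s} s) (hj1 : 1 ≤ j)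
    (hj2 : j ≤ K - 1) (hres : residual δ π w C K s j = slack δ π w C K s j) :
    slack δ π w C K s j = 0 := by
  refine le_antisymm (not_lt.1 fun hpos => ?_) (hs.slack_nonneg j hj1 hj2)
  have hbox := hs.mem_unitBox
  have hlt := lt_succ_of_residual_pos hδ.le hw hbox hs.le_succ hj1 (by omega) (hres ▸ hpos)
  have hcont : ContinuousWithinAt (fun x => slack δ π w C K (Function.update s j x) j)
      (Set.Ioc (s j) (s (j + 1))) (s j) :=
    (((continuousOn_slack hπc hwc hCc (by omega)).comp
      (continuous_const.update j continuous_id).continuousOn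
      fun _ hx => update_mem_unitBox hbox hx) (s j) (hbox j (by omega))).mono
      fun x hx => ⟨(hbox j (by omega)).1.trans hx.1.le, hx.2.trans (hbox (j + 1) (by omega)).2⟩
  obtain ⟨x, ⟨hjx, hx⟩, hxpos⟩ :=
    exists_mem_Ioc_pos hlt hcont (by simpa only [Function.update_eq_self] using hpos)
  have hs' := hs.update hδ.le hG.monotoneOn hw hC.antitoneOn hj1 (by omega)
    (hx.trans (hbox (j + 1) (by omega)).2) hjx.le (fun _ => hx) (fun _ => hxpos.le)
  refine (isMaxOn_iff.1 hmax _ hs').not_gt (value_lt_value hδ hK hG hC hbox hs'.mem_unitBox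
    (fun τ _ => le_update_iff.2 ⟨hjx.le, fun _ _ => le_rfl⟩ τ)
    (Function.update_of_ne (by omega) ..).symm hj1 (by omega) ?_)
  rwa [Function.update_self]

lemma slack_eq_zero_of_isMaxOn (hδ : 0 < δ) (hK : 2 ≤ K)
    (hπc : ContinuousOn π (Set.Icc 0 1)) (hwc : ContinuousOn w (Set.Icc 0 1))
    (hCc : ContinuousOn C (Set.Icc 0 1)) (hG : StrictMonoOn (fun x => π x + w x) (Set.Icc 0 1))
    (hw : AntitoneOn w (Set.Icc 0 1)) (hC : StrictAntiOn C (Set.Icc 0 1))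
    (hs : Admissible δ π w C K s)
    (hmax : IsMaxOn (value δ π w C K) {s | Admissible δ π w C K s} s) :
    ∀ t, 1 ≤ t → t ≤ K - 1 → slack δ π w C K s t = 0 := by
  intro t h1 h2
  have key : ∀ j, 1 ≤ j → j ≤ K - 1 →
      residual δ π w C K s j = slack δ π w C K s j → slack δ π w C K s j = 0 :=
    fun j => slack_eq_zero_of_residual_eq_slack hδ hK hπc hwc hCc hG hw hC hs hmax
  induction h2 using Nat.decreasingInduction with
  | self => exact key _ h1 le_rfl (residual_eq_slack hK le_rfl fun h => absurd h (by omega))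
  | of_succ t ht ih => exact key t h1 ht.le (residual_eq_slack hK ht.le fun _ => ih (by omega))

end Maximizers

section OptimalContracts

variable {δ : ℝ} {π w C : ℝ → ℝ} {K : ℕ} {s s' p' : ℕ → ℝ}

lemma optimalR_of_isMaxOn (hδ : δ ∈ Set.Ioo 0 1) (hK : 2 ≤ K)
    (hπ : MonotoneOn π (Set.Icc 0 1)) (hw : AntitoneOn w (Set.Icc 0 1))
    (hC : AntitoneOn C (Set.Icc 0 1))
    (hs : Admissible δ π w C K s)
    (hmax : IsMaxOn (value δ π w C K) {s | Admissible δ π w C K s} s) :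
    OptimalR δ π w C K s (compensation δ w K s) :=
  ⟨implementableR_compensation hδ hK hπ hw hC hs, fun _ _ h => (PiR_le_value hδ hK h).trans
    (isMaxOn_iff.1 hmax _ (admissible_of_implementableR hδ.2.ne h))⟩

lemma apply_one_le_of_rbe (hδ : δ ∈ Set.Ioo 0 1) (hK : 2 ≤ K)
    (hπ : MonotoneOn π (Set.Icc 0 1)) (hC : StrictAntiOn C (Set.Icc 0 1))
    (hs : Admissible δ π w C K s)
    (hmax : IsMaxOn (value δ π w C K) {s | Admissible δ π w C K s} s)
    (hslack : ∀ t, 1 ≤ t → t ≤ K - 1 → slack δ π w C K s t = 0)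
    (hbox : s' ∈ unitBox K) (h0 : s' 0 = 0) (hmono : ∀ t < K, s' t ≤ s' (t + 1))
    (hrbe : RBE δ π w C K s') :
    s' 1 ≤ s 1 := by
  have hslack' := (slack_eq_zero_iff hK).2 ((rbe_iff hδ.2.ne).1 hrbe)
  have hs' : Admissible δ π w C K s' := ⟨hbox, h0, hmono, fun t h1 h2 => (hslack' t h1 h2).ge⟩
  have hval := isMaxOn_iff.1 hmax _ hs'
  rw [value_eq_slack hK, value_eq_slack hK, hslack 1 le_rfl (by omega),
    hslack' 1 le_rfl (by omega), h0, hs.zero, add_le_add_iff_left] at hval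
  exact ((gain_strictMonoOn hδ.1 hπ hC).le_iff_le (hbox 1 (by omega))
    (hs.mem_unitBox 1 (by omega))).1 hval

lemma eq_of_optimalR (hδ : δ ∈ Set.Ioo 0 1) (hK : 2 ≤ K)
    (hπc : ContinuousOn π (Set.Icc 0 1)) (hwc : ContinuousOn w (Set.Icc 0 1))
    (hCc : ContinuousOn C (Set.Icc 0 1)) (hπ : MonotoneOn π (Set.Icc 0 1))
    (hw : AntitoneOn w (Set.Icc 0 1)) (hG : StrictMonoOn (fun x => π x + w x) (Set.Icc 0 1))
    (hC : StrictAntiOn C (Set.Icc 0 1)) (hs : Admissible δ π w C K s)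
    (hmax : IsMaxOn (value δ π w C K) {s | Admissible δ π w C K s} s)
    (hslack : ∀ t, 1 ≤ t → t ≤ K - 1 → slack δ π w C K s t = 0)
    (hopt : OptimalR δ π w C K s' p') :
    (∀ t ≤ K, s' t = s t) ∧ ∀ t < K, p' t = compensation δ w K s t := by
  have hs' := admissible_of_implementableR hδ.2.ne hopt.1
  have hle : value δ π w C K s ≤ PiR δ π C K s' p' 0 :=
    hopt.2 _ _ (implementableR_compensation hδ hK hπ hw hC.antitoneOn hs)
  have hval : value δ π w C K s' = value δ π w C K s :=
    le_antisymm (isMaxOn_iff.1 hmax _ hs') (hle.trans (PiR_le_value hδ hK hopt.1))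
  have hmax' : IsMaxOn (value δ π w C K) {s | Admissible δ π w C K s} s' :=
    isMaxOn_iff.2 fun u hu => hval ▸ isMaxOn_iff.1 hmax u hu
  have hslack' := slack_eq_zero_of_isMaxOn hδ.1 hK hπc hwc hCc hG hw hC hs' hmax'
  have h1 : s' 1 = s 1 := by
    rw [value_eq_slack hK, value_eq_slack hK, hslack 1 le_rfl (by omega),
      hslack' 1 le_rfl (by omega), hs'.zero, hs.zero, add_right_inj] at hval
    exact (gain_strictMonoOn hδ.1 hπ hC).injOn (hs'.mem_unitBox 1 (by omega))
      (hs.mem_unitBox 1 (by omega)) hval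
  have heq := eqOn_of_residual_eq_zero hδ.1 hπ hC hs'.mem_unitBox hs.mem_unitBox
    ((slack_eq_zero_iff hK).1 hslack') ((slack_eq_zero_iff hK).1 hslack)
    (hs'.zero.trans hs.zero.symm) h1
  refine ⟨heq, fun t ht => ?_⟩
  rw [eq_compensation_of_implementableR hδ hK hopt.1 hslack' (hval ▸ hle) t ht,
    compensation_congr heq ht.le]

end OptimalContracts

end Retirement

open Retirement

theorem retirement_optimal_structure_general
    (δ : ℝ) (hδ : δ ∈ Set.Ioo (0 : ℝ) 1) (K : ℕ) (hK : 2 ≤ K) (π w C : ℝ → ℝ)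
    (hπc : ContinuousOn π (Set.Icc 0 1)) (hwc : ContinuousOn w (Set.Icc 0 1))
    (hπm : StrictMonoOn π (Set.Icc 0 1)) (hwa : StrictAntiOn w (Set.Icc 0 1))
    (hGm : StrictMonoOn (fun x => π x + w x) (Set.Icc 0 1))
    (hCc : ContinuousOn C (Set.Icc 0 1)) (hCa : StrictAntiOn C (Set.Icc 0 1)) :
    ∃ s p : ℕ → ℝ, OptimalR δ π w C K s p ∧
      (∀ t < K, s t < s (t + 1)) ∧ s 0 = 0 ∧ s K = 1 ∧
      (∀ s' : ℕ → ℝ, (∀ t ≤ K, s' t ∈ Set.Icc (0 : ℝ) 1) → s' 0 = 0 →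
        (∀ t < K, s' t ≤ s' (t + 1)) → RBE δ π w C K s' → s' 1 ≤ s 1) ∧
      p 0 = 0 ∧
      (∀ t : ℕ, 1 ≤ t → t ≤ K - 1 →
        p t = (1 - δ ^ (K - t)) * (w (s (t - 1)) - w (s t)) / (1 - δ)) ∧
      (∀ s' p' : ℕ → ℝ, OptimalR δ π w C K s' p' →
        (∀ t ≤ K, s' t = s t) ∧ (∀ t < K, p' t = p t)) := by
  obtain ⟨s, hs, hmax⟩ := exists_isMaxOn_value hK hπc hwc hCc
  have hslack := slack_eq_zero_of_isMaxOn hδ.1 hK hπc hwc hCc hGm hwa.antitoneOn hCa hs hmax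
  have hK1 : s K = 1 := eq_one_of_isMaxOn hδ.1 hK hGm hwa.antitoneOn hCa hs hmax
  refine ⟨s, compensation δ w K s,
    optimalR_of_isMaxOn hδ hK hπm.monotoneOn hwa.antitoneOn hCa.antitoneOn hs hmax,
    strictMono_of_residual_eq_zero hδ.1 hπm.monotoneOn hwa hCa hs.mem_unitBox hs.le_succ
      ((slack_eq_zero_iff hK).1 hslack) (by rw [hs.zero, hK1]; exact zero_ne_one),
    hs.zero, hK1, fun _ => apply_one_le_of_rbe hδ hK hπm.monotoneOn hCa hs hmax hslack,
    compensation_zero, fun t h1 _ => ?_, fun _ _ =>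
      eq_of_optimalR hδ hK hπc hwc hCc hπm.monotoneOn hwa.antitoneOn hGm hCa hs hmax hslack⟩
  rw [compensation, if_neg (by omega), annuity_mul_eq_div hδ.2.ne]

/-- Existence, uniqueness and structure of the optimal contract with retirement. -/
theorem retirement_optimal_structure
    (δ : ℝ) (hδ : δ ∈ Set.Ioo (0 : ℝ) 1) (K : ℕ) (hK : 2 ≤ K) (π w C : ℝ → ℝ)
    (hπc : ContinuousOn π (Set.Icc 0 1)) (hwc : ContinuousOn w (Set.Icc 0 1))
    (hπm : StrictMonoOn π (Set.Icc 0 1)) (hwa : StrictAntiOn w (Set.Icc 0 1))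
    (hGm : StrictMonoOn (fun x => π x + w x) (Set.Icc 0 1))
    (hCc : ContinuousOn C (Set.Icc 0 1)) (hCa : StrictAntiOn C (Set.Icc 0 1))
    (hC1 : C 1 = 0) :
    ∃ s p : ℕ → ℝ, OptimalR δ π w C K s p ∧
      (∀ t < K, s t < s (t + 1)) ∧ s 0 = 0 ∧ s K = 1 ∧
      (∀ s' : ℕ → ℝ, (∀ t ≤ K, s' t ∈ Set.Icc (0 : ℝ) 1) → s' 0 = 0 →
        (∀ t < K, s' t ≤ s' (t + 1)) → RBE δ π w C K s' → s' 1 ≤ s 1) ∧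
      p 0 = 0 ∧
      (∀ t : ℕ, 1 ≤ t → t ≤ K - 1 →
        p t = (1 - δ ^ (K - t)) * (w (s (t - 1)) - w (s t)) / (1 - δ)) ∧
      (∀ s' p' : ℕ → ℝ, OptimalR δ π w C K s' p' →
        (∀ t ≤ K, s' t = s t) ∧ (∀ t < K, p' t = p t)) :=
  retirement_optimal_structure_general δ hδ K hK π w C hπc hwc hπm hwa hGm hCc hCa
end

section
/- Higher catch-up costs benefit the principal: let C and Ĉ both be continuous, strictly decreasing catch-up cost functions on [0,1] with C(1) = Ĉ(1) = 0, and suppose Ĉ(x) > C(x) for every x ∈ [0,1). If (s,p) is optimal with retirement under cost C and (ŝ,p̂) is optimal with retirement under cost Ĉ, then the principal's time-0 profit computed with Ĉ at (ŝ,p̂) is strictly greater than her time-0 profit computed with C at (s,p). -/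
open Set Filter

open Topology

lemma myGeomSumIco (δ : ℝ) (hδ1 : δ ≠ 1) (t K : ℕ) :
    (1 - δ ^ (K - t)) / (1 - δ) = ∑ τ ∈ Finset.Ico t K, δ ^ (τ - t) := by
  rw [Finset.sum_Ico_eq_sum_range]
  simp only [add_tsub_cancel_left]
  rw [geom_sum_eq hδ1, show (1:ℝ) - δ ^ (K - t) = -(δ ^ (K - t) - 1) by ring,
    show (1:ℝ) - δ = -(δ - 1) by ring, neg_div_neg_eq]

lemma s_mono' (K : ℕ) (s : ℕ → ℝ) (hstep : ∀ t < K, s t ≤ s (t + 1)) :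
    ∀ b ≤ K, ∀ a ≤ b, s a ≤ s b := by
  intro b
  induction b with
  | zero => intro _ a ha; rw [Nat.le_zero.mp ha]
  | succ n ih =>
    intro hbK a ha
    rcases Nat.eq_or_lt_of_le ha with h | h
    · rw [h]
    · exact (ih (le_trans (Nat.le_succ n) hbK) a (Nat.lt_succ_iff.mp h)).trans
        (hstep n (Nat.lt_of_succ_le hbK))

lemma s_lt_one' {δ : ℝ} (hδ : δ ∈ Set.Ioo (0:ℝ) 1) {K : ℕ} {π w C : ℝ → ℝ} {s p : ℕ → ℝ}
    (hwa : StrictAntiOn w (Set.Icc 0 1)) (hC1 : C 1 = 0)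
    (himp : ImplementableR δ π w C K s p) :
    ∀ t < K, s t < 1 := by
  obtain ⟨hrange, hs0, hstep, hp, hPIC, hEIC⟩ := himp
  have hmono := s_mono' K s hstep
  intro t
  induction t using Nat.strong_induction_on with
  | _ t IH =>
    intro htK
    by_contra hge
    have hst1 : s t = 1 := le_antisymm (hrange t htK.le).2 (not_lt.mp hge)
    have ht0 : t ≠ 0 := by rintro rfl; rw [hs0] at hst1; norm_num at hst1
    obtain ⟨u, rfl⟩ := Nat.exists_eq_succ_of_ne_zero ht0
    have hsu : s u < 1 := IH u (Nat.lt_succ_self u) (by omega)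
    have hall : ∀ τ, u + 1 ≤ τ → τ ≤ K → s τ = 1 := fun τ h1 h2 =>
      le_antisymm (hrange τ h2).2 (by rw [← hst1]; exact hmono τ h2 (u+1) h1)
    set G := ∑ τ ∈ Finset.Ico (u+1) K, δ ^ (τ - (u+1)) with hGdef
    have hG : (1 - δ ^ (K - (u+1))) / (1 - δ) = G := by
      rw [hGdef]; exact myGeomSumIco δ (ne_of_lt hδ.2) (u+1) K
    have hGpos : 0 < G := Finset.sum_pos (fun i _ => pow_pos hδ.1 _)
      ⟨u+1, Finset.mem_Ico.mpr ⟨le_rfl, htK⟩⟩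
    set P := ∑ τ ∈ Finset.Ico (u+1) K, δ ^ (τ - (u+1)) * p τ with hPdef
    have hPnn : 0 ≤ P := Finset.sum_nonneg fun τ hτ =>
      mul_nonneg (pow_nonneg hδ.1.le _) (hp τ (Finset.mem_Ico.mp hτ).2)
    have hPic := hPIC (u+1) htK
    have hPival : PiR δ π C K s p (u+1) = G * π 1 - P := by
      unfold PiR
      rw [hall K (by omega) le_rfl, hC1, mul_zero, sub_zero]
      rw [show (∑ τ ∈ Finset.Ico (u+1) K, δ ^ (τ - (u+1)) * (π (s τ) - p τ))
          = ∑ τ ∈ Finset.Ico (u+1) K, (δ ^ (τ - (u+1)) * π 1 - δ ^ (τ - (u+1)) * p τ) from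
        Finset.sum_congr rfl fun τ hτ => by
          rw [hall τ (Finset.mem_Ico.mp hτ).1 (Finset.mem_Ico.mp hτ).2.le]; ring]
      rw [Finset.sum_sub_distrib, ← Finset.sum_mul, hGdef, hPdef]
    have hLic : (1 - δ ^ (K - (u+1))) * π (s (u+1)) / (1 - δ)
        - δ ^ (K - 1 - (u+1)) * C (s (u+1)) = G * π 1 := by
      rw [hst1, hC1, mul_zero, sub_zero, ← hG]; ring
    rw [hPival, hLic] at hPic
    have hP0 : P ≤ 0 := by linarith
    have hEic := hEIC u htK
    have hWval : WR δ w K s p (u+1) = G * w 1 + P := by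
      unfold WR
      rw [show (∑ τ ∈ Finset.Ico (u+1) K, δ ^ (τ - (u+1)) * (w (s τ) + p τ))
          = ∑ τ ∈ Finset.Ico (u+1) K, (δ ^ (τ - (u+1)) * w 1 + δ ^ (τ - (u+1)) * p τ) from
        Finset.sum_congr rfl fun τ hτ => by
          rw [hall τ (Finset.mem_Ico.mp hτ).1 (Finset.mem_Ico.mp hτ).2.le]; ring]
      rw [Finset.sum_add_distrib, ← Finset.sum_mul, hGdef, hPdef]
    have hLe : (1 - δ ^ (K - u - 1)) * w (s u) / (1 - δ) = G * w (s u) := by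
      rw [show K - u - 1 = K - (u+1) from by omega, ← hG]; ring
    rw [hWval, hLe] at hEic
    have hw1 : w 1 < w (s u) := hwa (hrange u (by omega)) ⟨zero_le_one, le_rfl⟩ hsu
    nlinarith [mul_lt_mul_of_pos_left hw1 hGpos]

lemma sK_eq_one' {δ : ℝ} (hδ : δ ∈ Set.Ioo (0:ℝ) 1) {K : ℕ} (hK : 2 ≤ K)
    {π w C : ℝ → ℝ} {s p : ℕ → ℝ}
    (hCa : StrictAntiOn C (Set.Icc 0 1)) (hC1 : C 1 = 0)
    (hopt : OptimalR δ π w C K s p) : s K = 1 := by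
  obtain ⟨⟨hrange, hs0, hstep, hp, hPIC, hEIC⟩, hmax⟩ := hopt
  by_contra hne
  have hlt : s K < 1 := lt_of_le_of_ne (hrange K le_rfl).2 hne
  have hCpos : 0 < C (s K) := by
    have := hCa (hrange K le_rfl) ⟨zero_le_one, le_rfl⟩ hlt
    rwa [hC1] at this
  set s' : ℕ → ℝ := Function.update s K 1 with hs'def
  have hs'ne : ∀ τ, τ ≠ K → s' τ = s τ := fun τ h => Function.update_of_ne h _ _
  have hs'K : s' K = 1 := Function.update_self _ _ _
  have hPi' : ∀ t, PiR δ π C K s' p t = PiR δ π C K s p t + δ ^ (K - 1 - t) * C (s K) := by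
    intro t
    unfold PiR
    rw [hs'K, hC1, mul_zero, sub_zero]
    have hc : (∑ τ ∈ Finset.Ico t K, δ ^ (τ - t) * (π (s' τ) - p τ))
        = ∑ τ ∈ Finset.Ico t K, δ ^ (τ - t) * (π (s τ) - p τ) :=
      Finset.sum_congr rfl fun τ hτ => by
        rw [hs'ne τ (Nat.ne_of_lt (Finset.mem_Ico.mp hτ).2)]
    rw [hc]; ring
  have hW' : ∀ t, WR δ w K s' p t = WR δ w K s p t := by
    intro t; unfold WR
    exact Finset.sum_congr rfl fun τ hτ => by
      rw [hs'ne τ (Nat.ne_of_lt (Finset.mem_Ico.mp hτ).2)]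
  have himp' : ImplementableR δ π w C K s' p := by
    refine ⟨?_, ?_, ?_, hp, ?_, ?_⟩
    · intro t ht
      rcases eq_or_ne t K with rfl | h
      · rw [hs'K]; exact ⟨zero_le_one, le_rfl⟩
      · rw [hs'ne t h]; exact hrange t ht
    · rw [hs'ne 0 (by omega)]; exact hs0
    · intro t htK
      rcases eq_or_ne (t+1) K with h | h
      · rw [hs'ne t (Nat.ne_of_lt htK), h, hs'K]
        exact (hrange t htK.le).2
      · rw [hs'ne t (Nat.ne_of_lt htK), hs'ne (t+1) h]
        exact hstep t htK
    · intro t htK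
      rw [hs'ne t (Nat.ne_of_lt htK), hPi' t]
      have h1 : 0 ≤ δ ^ (K - 1 - t) * C (s K) :=
        mul_nonneg (pow_nonneg hδ.1.le _) hCpos.le
      linarith [hPIC t htK]
    · intro t ht
      rw [hs'ne t (by omega), hW' (t+1)]
      exact hEIC t ht
  have hm := hmax s' p himp'
  rw [hPi' 0] at hm
  linarith [mul_pos (pow_pos hδ.1 (K - 1 - 0)) hCpos]

/-- Uniformly higher catch-up costs strictly benefit the principal. -/
theorem higher_catchup_cost_benefits_principal
    (δ : ℝ) (hδ : δ ∈ Set.Ioo (0 : ℝ) 1) (K : ℕ) (hK : 2 ≤ K) (π w : ℝ → ℝ)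
    (hπc : ContinuousOn π (Set.Icc 0 1)) (hwc : ContinuousOn w (Set.Icc 0 1))
    (hπm : StrictMonoOn π (Set.Icc 0 1)) (hwa : StrictAntiOn w (Set.Icc 0 1))
    (hGm : StrictMonoOn (fun x => π x + w x) (Set.Icc 0 1))
    (C Chat : ℝ → ℝ)
    (hCc : ContinuousOn C (Set.Icc 0 1)) (hCa : StrictAntiOn C (Set.Icc 0 1))
    (hC1 : C 1 = 0)
    (hChC : ContinuousOn Chat (Set.Icc 0 1)) (hCha : StrictAntiOn Chat (Set.Icc 0 1))
    (hCh1 : Chat 1 = 0)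
    (hgt : ∀ x ∈ Set.Ico (0 : ℝ) 1, C x < Chat x)
    (s p shat phat : ℕ → ℝ)
    (hopt : OptimalR δ π w C K s p) (hopthat : OptimalR δ π w Chat K shat phat) :
    PiR δ π C K s p 0 < PiR δ π Chat K shat phat 0 := by
  have h1δ : (1:ℝ) - δ ≠ 0 := by intro h; linarith [hδ.2]
  have hdiv : ∀ y : ℝ, (1 - δ) * y / (1 - δ) = y := fun y => by
    rw [mul_comm, mul_div_assoc, div_self h1δ, mul_one]
  have hsK : s K = 1 := sK_eq_one' hδ hK hCa hC1 hopt
  obtain ⟨himp, hmax⟩ := hopt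
  have hlt1 : ∀ t < K, s t < 1 := s_lt_one' hδ hwa hC1 himp
  obtain ⟨hrange, hs0, hstep, hp, hPIC, hEIC⟩ := himp
  obtain ⟨himphat, hmaxhat⟩ := hopthat
  have hK1 : K - 1 < K := by omega
  have ha01 : s (K-1) ∈ Set.Icc (0:ℝ) 1 := hrange (K-1) hK1.le
  have ha1 : s (K-1) < 1 := hlt1 (K-1) hK1
  have hIco : Finset.Ico (K-1) K = {K-1} := by
    ext τ; simp only [Finset.mem_Ico, Finset.mem_singleton]; omega
  have hKsub : K - (K-1) = 1 := by omega
  have hPiK1 : PiR δ π C K s p (K-1) = π (s (K-1)) - p (K-1) := by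
    unfold PiR
    rw [hIco, Finset.sum_singleton, hsK, hC1, mul_zero, sub_zero, Nat.sub_self, pow_zero,
      one_mul]
  have hpK_le : p (K-1) ≤ C (s (K-1)) := by
    have hPic := hPIC (K-1) hK1
    rw [hPiK1, hKsub, pow_one, hdiv, Nat.sub_self, pow_zero, one_mul] at hPic
    linarith
  have hpK_lt : p (K-1) < Chat (s (K-1)) := lt_of_le_of_lt hpK_le (hgt _ ⟨ha01.1, ha1⟩)
  -- choose x slightly above s (K-1)
  have hcont : ContinuousWithinAt (fun y => Chat y + w y) (Set.Ioo (s (K-1)) 1) (s (K-1)) := by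
    have h := (hChC.add hwc) (s (K-1)) ha01
    exact h.mono fun y hy => ⟨le_trans ha01.1 hy.1.le, hy.2.le⟩
  haveI hnb : (𝓝[Set.Ioo (s (K-1)) 1] (s (K-1))).NeBot := by
    apply mem_closure_iff_nhdsWithin_neBot.mp
    rw [closure_Ioo (ne_of_lt ha1)]
    exact ⟨le_rfl, ha1.le⟩
  have hlt' : p (K-1) + w (s (K-1)) < (fun y => Chat y + w y) (s (K-1)) := by
    show p (K-1) + w (s (K-1)) < Chat (s (K-1)) + w (s (K-1)); linarith
  have hev : ∀ᶠ y in 𝓝[Set.Ioo (s (K-1)) 1] (s (K-1)),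
      p (K-1) + w (s (K-1)) < Chat y + w y :=
    hcont.eventually (eventually_gt_nhds hlt')
  obtain ⟨x, hx_gt, hx_mem⟩ := (hev.and eventually_mem_nhdsWithin).exists
  have hx01 : x ∈ Set.Icc (0:ℝ) 1 := ⟨le_trans ha01.1 hx_mem.1.le, hx_mem.2.le⟩
  have hwx : w x < w (s (K-1)) := hwa ha01 hx01 hx_mem.1
  have hDpos : (0:ℝ) < (π x + w x) - (π (s (K-1)) + w (s (K-1))) := by
    have h : π (s (K-1)) + w (s (K-1)) < π x + w x := hGm ha01 hx01 hx_mem.1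
    linarith
  have hq_lt : p (K-1) + w (s (K-1)) - w x < Chat x := by linarith
  set s' : ℕ → ℝ := Function.update s (K-1) x with hs'def
  set p' : ℕ → ℝ := Function.update p (K-1) (p (K-1) + w (s (K-1)) - w x) with hp'def
  have hs'ne : ∀ τ, τ ≠ K-1 → s' τ = s τ := fun τ h => Function.update_of_ne h _ _
  have hp'ne : ∀ τ, τ ≠ K-1 → p' τ = p τ := fun τ h => Function.update_of_ne h _ _
  have hs'K1 : s' (K-1) = x := Function.update_self _ _ _
  have hp'K1 : p' (K-1) = p (K-1) + w (s (K-1)) - w x := Function.update_self _ _ _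
  have hs'K : s' K = s K := hs'ne K (by omega)
  have hkey : ∀ t, t ≤ K-1 → PiR δ π Chat K s' p' t
      = PiR δ π C K s p t
        + δ ^ (K - 1 - t) * ((π x + w x) - (π (s (K-1)) + w (s (K-1)))) := by
    intro t ht
    unfold PiR
    rw [hs'K, hsK, hCh1, hC1, mul_zero, sub_zero]
    have hmem : K-1 ∈ Finset.Ico t K := Finset.mem_Ico.mpr ⟨ht, hK1⟩
    rw [← Finset.sum_erase_add _ (fun τ => δ ^ (τ - t) * (π (s' τ) - p' τ)) hmem,
      ← Finset.sum_erase_add _ (fun τ => δ ^ (τ - t) * (π (s τ) - p τ)) hmem]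
    have hcongr : ∑ τ ∈ (Finset.Ico t K).erase (K-1), δ ^ (τ - t) * (π (s' τ) - p' τ)
        = ∑ τ ∈ (Finset.Ico t K).erase (K-1), δ ^ (τ - t) * (π (s τ) - p τ) :=
      Finset.sum_congr rfl fun τ hτ => by
        rw [hs'ne τ (Finset.mem_erase.mp hτ).1, hp'ne τ (Finset.mem_erase.mp hτ).1]
    rw [hcongr, hs'K1, hp'K1]
    ring
  have hWR' : ∀ u, WR δ w K s' p' u = WR δ w K s p u := by
    intro u
    unfold WR
    refine Finset.sum_congr rfl fun τ hτ => ?_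
    rcases eq_or_ne τ (K-1) with rfl | hτne
    · rw [hs'K1, hp'K1]; ring
    · rw [hs'ne τ hτne, hp'ne τ hτne]
  have himp' : ImplementableR δ π w Chat K s' p' := by
    refine ⟨?_, ?_, ?_, ?_, ?_, ?_⟩
    · intro t ht
      rcases eq_or_ne t (K-1) with rfl | h
      · rw [hs'K1]; exact hx01
      · rw [hs'ne t h]; exact hrange t ht
    · rw [hs'ne 0 (by omega)]; exact hs0
    · intro t htK
      rcases eq_or_ne t (K-1) with rfl | h1
      · rw [hs'K1, show K-1+1 = K from by omega, hs'K, hsK]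
        exact hx_mem.2.le
      · rw [hs'ne t h1]
        rcases eq_or_ne (t+1) (K-1) with h2 | h2
        · rw [h2, hs'K1]
          have hh := hstep t htK
          rw [h2] at hh
          exact hh.trans hx_mem.1.le
        · rw [hs'ne (t+1) h2]; exact hstep t htK
    · intro t htK
      rcases eq_or_ne t (K-1) with rfl | h
      · rw [hp'K1]
        have := hp (K-1) hK1
        linarith
      · rw [hp'ne t h]; exact hp t htK
    · intro t htK
      rcases eq_or_ne t (K-1) with rfl | h
      · rw [hs'K1, hkey (K-1) le_rfl, hPiK1, hKsub, pow_one, hdiv, Nat.sub_self,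
          pow_zero, one_mul, one_mul]
        linarith
      · rw [hs'ne t h, hkey t (by omega)]
        have hCle : C (s t) ≤ Chat (s t) := (hgt (s t) ⟨(hrange t htK.le).1, hlt1 t htK⟩).le
        have h1 : δ ^ (K - 1 - t) * C (s t) ≤ δ ^ (K - 1 - t) * Chat (s t) :=
          mul_le_mul_of_nonneg_left hCle (pow_nonneg hδ.1.le _)
        have h2 : 0 ≤ δ ^ (K - 1 - t) * ((π x + w x) - (π (s (K-1)) + w (s (K-1)))) :=
          mul_nonneg (pow_nonneg hδ.1.le _) hDpos.le
        linarith [hPIC t htK]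
    · intro t htK
      rw [hs'ne t (by omega), hWR' (t+1)]
      exact hEIC t htK
  have hfeas := hmaxhat s' p' himp'
  have h0 := hkey 0 (by omega)
  have hpos : 0 < δ ^ (K - 1 - 0) * ((π x + w x) - (π (s (K-1)) + w (s (K-1)))) :=
    mul_pos (pow_pos hδ.1 _) hDpos
  linarith
end
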